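/- arXiv:2408.01413 — 5 statements merged into one kernel-verified Lean document; each statement's English description precedes it below -/
import Mathlib

section
/- Assume τ > 0. If s* is a Wardrop equilibrium with strategy distribution σ* = (σ*_toll, σ*_pool, σ*_o), then the equilibrium latency difference is strictly positive, ℓ_δ(σ*) > 0, and moreover σ*_pool > 0 and σ*_o > 0. -/
open MeasureTheory Set

namespace HOT

inductive Action : Type
  | toll
  | pool
  | o
  deriving DecidableEq

instance : MeasurableSpace Action := ⊤

/-- The rectangle of preference parameters `[0,β̄] × [0,γ̄]`. -/
def Rbox (βb γb : ℝ) : Set (ℝ × ℝ) := Icc (0:ℝ) βb ×ˢ Icc (0:ℝ) γb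

/-- The strategy distribution of a strategy profile `s`: the `f`-mass of agents
in the rectangle choosing each action. -/
noncomputable def stratDist (βb γb : ℝ) (f : ℝ × ℝ → ℝ) (s : ℝ × ℝ → Action)
    (a : Action) : ℝ :=
  ∫ p in Rbox βb γb ∩ s ⁻¹' {a}, f p

/-- HOT-lane vehicle flow induced by a strategy distribution. -/
noncomputable def xh (A : ℕ) (D : ℝ) (σ : Action → ℝ) : ℝ :=
  (σ Action.toll + σ Action.pool / (A : ℝ)) * D

/-- Ordinary-lane vehicle flow induced by a strategy distribution. -/
noncomputable def xo (D : ℝ) (σ : Action → ℝ) : ℝ := σ Action.o * D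

/-- Latency difference `ℓ_δ(σ) = ℓ_o(x_o(σ)) − ℓ_h(x_h(σ))`. -/
noncomputable def ldiff (ℓo ℓh : ℝ → ℝ) (A : ℕ) (D : ℝ) (σ : Action → ℝ) : ℝ :=
  ℓo (xo D σ) - ℓh (xh A D σ)

/-- The cost of agent `(β,γ)` for each action, given a strategy distribution. -/
noncomputable def cost (ℓo ℓh : ℝ → ℝ) (A : ℕ) (D τ : ℝ) (σ : Action → ℝ)
    (β γ : ℝ) : Action → ℝ
  | Action.toll => β * ℓh (xh A D σ) + τ
  | Action.pool => β * ℓh (xh A D σ) + γ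
  | Action.o => β * ℓo (xo D σ)

/-- Wardrop equilibrium: every agent's action minimizes its own cost. -/
def IsWardrop (ℓo ℓh : ℝ → ℝ) (A : ℕ) (D τ βb γb : ℝ) (f : ℝ × ℝ → ℝ)
    (s : ℝ × ℝ → Action) : Prop :=
  Measurable s ∧
  ∀ p ∈ Rbox βb γb, ∀ a : Action,
    cost ℓo ℓh A D τ (stratDist βb γb f s) p.1 p.2 (s p) ≤
      cost ℓo ℓh A D τ (stratDist βb γb f s) p.1 p.2 a

/-- Threshold carpool share `σ†_pool = ∫₀^β̄ ∫₀^{min(τ,γ̄)·β/β̄} f`. -/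
noncomputable def sigmaDagger (βb γb τ : ℝ) (f : ℝ × ℝ → ℝ) : ℝ :=
  ∫ β in (0:ℝ)..βb, ∫ γ in (0:ℝ)..(min τ γb * β / βb), f (β, γ)

/-- Threshold latency difference `ℓ† = ℓ_o((1−σ†)·D) − ℓ_h((σ†/A)·D)`. -/
noncomputable def ellDagger (ℓo ℓh : ℝ → ℝ) (A : ℕ) (D βb γb τ : ℝ)
    (f : ℝ × ℝ → ℝ) : ℝ :=
  ℓo ((1 - sigmaDagger βb γb τ f) * D) - ℓh (sigmaDagger βb γb τ f / (A : ℝ) * D)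

/-- Regime-B toll share as a function of the latency difference `δ`. -/
noncomputable def gB (τ βb γb : ℝ) (f : ℝ × ℝ → ℝ) (δ : ℝ) : ℝ :=
  ∫ γ in τ..γb, ∫ β in (τ / δ)..βb, f (β, γ)

/-- Regime-B carpool share as a function of the latency difference `δ`. -/
noncomputable def hB (τ βb : ℝ) (f : ℝ × ℝ → ℝ) (δ : ℝ) : ℝ :=
  ∫ γ in (0:ℝ)..τ, ∫ β in (γ / δ)..βb, f (β, γ)

end HOT

namespace HOT

lemma measurableSet_Rbox (βb γb : ℝ) : MeasurableSet (Rbox βb γb) :=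
  measurableSet_Icc.prod measurableSet_Icc

lemma isCompact_Rbox (βb γb : ℝ) : IsCompact (Rbox βb γb) :=
  isCompact_Icc.prod isCompact_Icc

lemma integrableOn_Rbox {βb γb : ℝ} {f : ℝ × ℝ → ℝ} (hfc : ContinuousOn f (Rbox βb γb)) :
    IntegrableOn f (Rbox βb γb) :=
  hfc.integrableOn_compact (isCompact_Rbox βb γb)

lemma measurableSet_piece {βb γb : ℝ} {s : ℝ × ℝ → Action} (hs : Measurable s) (a : Action) :
    MeasurableSet (Rbox βb γb ∩ s ⁻¹' {a}) :=
  (measurableSet_Rbox βb γb).inter (hs trivial)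

lemma sum_stratDist {βb γb : ℝ} {f : ℝ × ℝ → ℝ} {s : ℝ × ℝ → Action}
    (hfc : ContinuousOn f (Rbox βb γb)) (hs : Measurable s) :
    stratDist βb γb f s Action.toll + stratDist βb γb f s Action.pool
      + stratDist βb γb f s Action.o = ∫ p in Rbox βb γb, f p := by
  have hint := integrableOn_Rbox hfc
  have hdisj : ∀ a b : Action, a ≠ b →
      Disjoint (Rbox βb γb ∩ s ⁻¹' {a}) (Rbox βb γb ∩ s ⁻¹' {b}) := by
    intro a b hab
    rw [Set.disjoint_left]
    rintro p ⟨-, hpa⟩ ⟨-, hpb⟩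
    exact hab (hpa.symm.trans hpb)
  have hcover : (Rbox βb γb ∩ s ⁻¹' {Action.toll}) ∪
      ((Rbox βb γb ∩ s ⁻¹' {Action.pool}) ∪ (Rbox βb γb ∩ s ⁻¹' {Action.o}))
      = Rbox βb γb := by
    ext p
    simp only [Set.mem_union, Set.mem_inter_iff, Set.mem_preimage, Set.mem_singleton_iff]
    constructor
    · rintro (⟨h, -⟩ | ⟨h, -⟩ | ⟨h, -⟩) <;> exact h
    · intro h; cases hsp : s p <;> tauto
  have hIa : ∀ a : Action, IntegrableOn f (Rbox βb γb ∩ s ⁻¹' {a}) :=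
    fun a => hint.mono_set Set.inter_subset_left
  have h2 : ∫ p in (Rbox βb γb ∩ s ⁻¹' {Action.pool}) ∪ (Rbox βb γb ∩ s ⁻¹' {Action.o}), f p
      = stratDist βb γb f s Action.pool + stratDist βb γb f s Action.o :=
    setIntegral_union (hdisj _ _ (by simp)) (measurableSet_piece hs _) (hIa _) (hIa _)
  have h1 : ∫ p in (Rbox βb γb ∩ s ⁻¹' {Action.toll}) ∪
      ((Rbox βb γb ∩ s ⁻¹' {Action.pool}) ∪ (Rbox βb γb ∩ s ⁻¹' {Action.o})), f p
      = stratDist βb γb f s Action.toll + (stratDist βb γb f s Action.pool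
        + stratDist βb γb f s Action.o) := by
    rw [setIntegral_union (by
        rw [Set.disjoint_union_right]
        exact ⟨hdisj _ _ (by simp), hdisj _ _ (by simp)⟩)
      ((measurableSet_piece hs _).union (measurableSet_piece hs _)) (hIa _)
      ((hIa _).union (hIa _)), h2]
    rfl
  rw [hcover] at h1
  linarith [h1]

lemma stratDist_nonneg {βb γb : ℝ} {f : ℝ × ℝ → ℝ} {s : ℝ × ℝ → Action}
    (hfpos : ∀ p ∈ Rbox βb γb, 0 < f p) (hs : Measurable s) (a : Action) :
    0 ≤ stratDist βb γb f s a :=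
  setIntegral_nonneg (measurableSet_piece hs a) (fun p hp => (hfpos p hp.1).le)

lemma box_integral_pos {βb γb : ℝ} {f : ℝ × ℝ → ℝ}
    (hfc : ContinuousOn f (Rbox βb γb)) (hfpos : ∀ p ∈ Rbox βb γb, 0 < f p)
    {a b c d : ℝ} (hab : a < b) (hcd : c < d)
    (hsub : Icc a b ×ˢ Icc c d ⊆ Rbox βb γb) :
    0 < ∫ p in Icc a b ×ˢ Icc c d, f p := by
  set B : Set (ℝ × ℝ) := Icc a b ×ˢ Icc c d with hB
  have hBc : IsCompact B := isCompact_Icc.prod isCompact_Icc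
  have hBne : B.Nonempty := ⟨(a, c), ⟨⟨le_refl a, hab.le⟩, ⟨le_refl c, hcd.le⟩⟩⟩
  obtain ⟨p0, hp0, hmin⟩ := hBc.exists_isMinOn hBne (hfc.mono hsub)
  have hc0 : 0 < f p0 := hfpos p0 (hsub hp0)
  have hmeas : MeasurableSet B := measurableSet_Icc.prod measurableSet_Icc
  have hvol : volume B = ENNReal.ofReal (b - a) * ENNReal.ofReal (d - c) := by
    rw [hB, Measure.volume_eq_prod, Measure.prod_prod, Real.volume_Icc, Real.volume_Icc]
  have hfin : volume B ≠ ⊤ := by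
    rw [hvol]; exact ENNReal.mul_ne_top ENNReal.ofReal_ne_top ENNReal.ofReal_ne_top
  have hpos : 0 < volume B := by
    rw [hvol]
    exact ENNReal.mul_pos (ENNReal.ofReal_pos.2 (by linarith)).ne'
      (ENNReal.ofReal_pos.2 (by linarith)).ne'
  have hle := setIntegral_ge_of_const_le (c := f p0) hmeas hfin
    (fun x hx => hmin hx) ((integrableOn_Rbox hfc).mono_set hsub)
  have : 0 < f p0 * (volume B).toReal :=
    mul_pos hc0 (ENNReal.toReal_pos hpos.ne' hfin)
  rw [smul_eq_mul, measureReal_def] at hle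
  linarith [mul_comm (f p0) (volume B).toReal]

lemma stratDist_ge_box {βb γb : ℝ} {f : ℝ × ℝ → ℝ} {s : ℝ × ℝ → Action}
    (hfc : ContinuousOn f (Rbox βb γb)) (hfpos : ∀ p ∈ Rbox βb γb, 0 < f p)
    (hs : Measurable s) {B : Set (ℝ × ℝ)} (a : Action)
    (hsub : B ⊆ Rbox βb γb ∩ s ⁻¹' {a}) :
    ∫ p in B, f p ≤ stratDist βb γb f s a := by
  refine setIntegral_mono_set ((integrableOn_Rbox hfc).mono_set Set.inter_subset_left)
    (ae_restrict_of_forall_mem (measurableSet_piece hs a)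
      (fun p hp => (hfpos p hp.1).le)) (HasSubset.Subset.eventuallyLE hsub)

end HOT

open HOT

/-- If τ > 0, then at any Wardrop equilibrium the latency difference
is strictly positive, and the carpool and ordinary-lane shares are strictly positive. -/
theorem stmt0
    (ℓo ℓh : ℝ → ℝ) (A : ℕ) (D τ βb γb : ℝ) (f : ℝ × ℝ → ℝ)
    (hD : 0 < D) (hA : 2 ≤ A) (hβb : 0 < βb) (hγb : 0 < γb)
    (hoc : ContinuousOn ℓo (Ici 0)) (hom : StrictMonoOn ℓo (Ici 0))
    (hhc : ContinuousOn ℓh (Ici 0)) (hhm : StrictMonoOn ℓh (Ici 0))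
    (hfree : ℓo 0 = ℓh 0)
    (hfc : ContinuousOn f (Rbox βb γb)) (hfpos : ∀ p ∈ Rbox βb γb, 0 < f p)
    (hfint : (∫ p in Rbox βb γb, f p) = 1)
    (hτ : 0 < τ)
    (s : ℝ × ℝ → Action) (hs : IsWardrop ℓo ℓh A D τ βb γb f s) :
    0 < ldiff ℓo ℓh A D (stratDist βb γb f s) ∧
    0 < stratDist βb γb f s Action.pool ∧
    0 < stratDist βb γb f s Action.o := by
  obtain ⟨hsm, hW⟩ := hs
  set σ := stratDist βb γb f s with hσ
  set δ := ldiff ℓo ℓh A D σ with hδdef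
  have hA0 : (0:ℝ) < (A:ℝ) := by positivity
  -- nonnegativity of shares
  have hnn := stratDist_nonneg hfpos hsm
  -- Step 1 : δ > 0
  have hδ : 0 < δ := by
    by_contra hcon
    push_neg at hcon
    have hδle : ℓo (xo D σ) - ℓh (xh A D σ) ≤ 0 := hcon
    -- no one tolls
    have hT : Rbox βb γb ∩ s ⁻¹' {Action.toll} = ∅ := by
      ext p
      simp only [Set.mem_inter_iff, Set.mem_preimage, Set.mem_singleton_iff,
        Set.mem_empty_iff_false, iff_false, not_and]
      intro hp hsp
      have h := hW p hp Action.o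
      rw [hsp] at h
      simp only [cost] at h
      have hβ : 0 ≤ p.1 := hp.1.1
      nlinarith [mul_nonpos_of_nonneg_of_nonpos hβ hδle]
    have hσT : σ Action.toll = 0 := by
      rw [hσ, stratDist, hT, setIntegral_empty]
    -- poolers live on a null set
    have hPsub : Rbox βb γb ∩ s ⁻¹' {Action.pool} ⊆ Icc 0 βb ×ˢ ({0} : Set ℝ) := by
      rintro p ⟨hp, hsp⟩
      simp only [Set.mem_preimage, Set.mem_singleton_iff] at hsp
      have h := hW p hp Action.o
      rw [hsp] at h
      simp only [cost] at h
      have hβ : 0 ≤ p.1 := hp.1.1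
      have hγ : 0 ≤ p.2 := hp.2.1
      have hγ0 : p.2 = 0 := by
        nlinarith [mul_nonpos_of_nonneg_of_nonpos hβ hδle]
      exact ⟨hp.1, hγ0⟩
    have hnull : volume (Icc (0:ℝ) βb ×ˢ ({0} : Set ℝ)) = 0 := by
      rw [Measure.volume_eq_prod, Measure.prod_prod, Real.volume_singleton, mul_zero]
    have hσP : σ Action.pool = 0 := by
      rw [hσ, stratDist]
      rw [Measure.restrict_eq_zero.2 (measure_mono_null hPsub hnull), integral_zero_measure]
    have hσO : σ Action.o = 1 := by
      have := sum_stratDist hfc hsm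
      rw [hfint] at this
      rw [hσ]
      rw [hσ] at hσT hσP
      linarith
    have hxh : xh A D σ = 0 := by
      rw [xh, hσT, hσP]; ring
    have hxo : xo D σ = D := by
      rw [xo, hσO, one_mul]
    have : ℓo 0 < ℓo D := hom (Set.mem_Ici.2 (le_refl 0)) (Set.mem_Ici.2 hD.le) hD
    rw [hδdef, ldiff, hxh, hxo, ← hfree] at hcon
    linarith
  have hℓ : ℓo (xo D σ) = ℓh (xh A D σ) + δ := by rw [hδdef, ldiff]; ring
  refine ⟨hδ, ?_, ?_⟩
  -- Step 2 : σ_pool > 0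
  · set ε := min (min τ (βb * δ / 2)) γb with hε
    have hεpos : 0 < ε := by
      apply lt_min (lt_min hτ (by positivity)) hγb
    have hετ : ε ≤ τ := le_trans (min_le_left _ _) (min_le_left _ _)
    have hεβ : ε ≤ βb * δ / 2 := le_trans (min_le_left _ _) (min_le_right _ _)
    have hεγ : ε ≤ γb := min_le_right _ _
    set B : Set (ℝ × ℝ) := Icc (βb/2) βb ×ˢ Icc 0 (ε/2) with hB
    have hsubR : B ⊆ Rbox βb γb := by
      rintro p ⟨hp1, hp2⟩
      exact ⟨⟨by linarith [hp1.1], hp1.2⟩, ⟨hp2.1, by linarith [hp2.2]⟩⟩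
    have hsub : B ⊆ Rbox βb γb ∩ s ⁻¹' {Action.pool} := by
      intro p hp
      have hpR := hsubR hp
      refine ⟨hpR, ?_⟩
      simp only [Set.mem_preimage, Set.mem_singleton_iff]
      obtain ⟨hp1, hp2⟩ := hp
      have hβlo : βb / 2 ≤ p.1 := hp1.1
      have hγhi : p.2 ≤ ε / 2 := hp2.2
      have hγlo : 0 ≤ p.2 := hp2.1
      cases hsp : s p with
      | pool => rfl
      | toll =>
        exfalso
        have h := hW p hpR Action.pool
        rw [hsp] at h
        simp only [cost] at h
        linarith
      | o =>
        exfalso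
        have h := hW p hpR Action.pool
        rw [hsp, cost, cost, hℓ] at h
        have hbd : βb / 2 * δ ≤ p.1 * δ := mul_le_mul_of_nonneg_right hβlo hδ.le
        nlinarith
    calc (0:ℝ) < ∫ p in B, f p :=
          box_integral_pos hfc hfpos (by linarith) (by positivity) hsubR
      _ ≤ stratDist βb γb f s Action.pool :=
          stratDist_ge_box hfc hfpos hsm Action.pool hsub
  -- Step 3 : σ_o > 0
  · set m := min τ (γb / 2) with hm
    have hmpos : 0 < m := lt_min hτ (by positivity)
    have hmτ : m ≤ τ := min_le_left _ _
    have hmγ : m ≤ γb / 2 := min_le_right _ _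
    set εβ := min βb (m / (2 * δ)) with hεβdef
    have hεβpos : 0 < εβ := lt_min hβb (by positivity)
    set B : Set (ℝ × ℝ) := Icc 0 εβ ×ˢ Icc (γb/2) γb with hB
    have hsubR : B ⊆ Rbox βb γb := by
      rintro p ⟨hp1, hp2⟩
      exact ⟨⟨hp1.1, le_trans hp1.2 (min_le_left _ _)⟩, ⟨by linarith [hp2.1], hp2.2⟩⟩
    have hsub : B ⊆ Rbox βb γb ∩ s ⁻¹' {Action.o} := by
      intro p hp
      have hpR := hsubR hp
      refine ⟨hpR, ?_⟩
      simp only [Set.mem_preimage, Set.mem_singleton_iff]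
      obtain ⟨hp1, hp2⟩ := hp
      have hβlo : 0 ≤ p.1 := hp1.1
      have hβhi : p.1 ≤ m / (2 * δ) := le_trans hp1.2 (min_le_right _ _)
      have hγlo : γb / 2 ≤ p.2 := hp2.1
      have hβδ : p.1 * δ ≤ m / 2 := by
        calc p.1 * δ ≤ m / (2 * δ) * δ := mul_le_mul_of_nonneg_right hβhi hδ.le
          _ = m / 2 := by field_simp
      cases hsp : s p with
      | o => rfl
      | toll =>
        exfalso
        have h := hW p hpR Action.o
        rw [hsp, cost, cost, hℓ] at h
        nlinarith
      | pool =>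
        exfalso
        have h := hW p hpR Action.o
        rw [hsp, cost, cost, hℓ] at h
        nlinarith
    calc (0:ℝ) < ∫ p in B, f p :=
          box_integral_pos hfc hfpos hεβpos (by linarith) hsubR
      _ ≤ stratDist βb γb f s Action.o :=
          stratDist_ge_box hfc hfpos hsm Action.o hsub
end

section
/- Assume τ > 0. Then a Wardrop equilibrium exists, and the equilibrium strategy distribution is unique: if s and s' are Wardrop equilibria with strategy distributions σ and σ', then σ = σ' (and consequently ℓ_δ(σ) = ℓ_δ(σ')). -/
open MeasureTheory Set

open HOT
open Filter

namespace HOTAux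

/-! ### Null lines in the plane -/

lemma null_vert (a : ℝ) : (volume : Measure (ℝ × ℝ)) {p | p.1 = a} = 0 := by
  have h : {p : ℝ × ℝ | p.1 = a} = ({a} : Set ℝ) ×ˢ (univ : Set ℝ) := by
    ext ⟨x, y⟩; simp [eq_comm]
  rw [h, Measure.volume_eq_prod, Measure.prod_prod]
  simp

lemma null_horiz (a : ℝ) : (volume : Measure (ℝ × ℝ)) {p | p.2 = a} = 0 := by
  have h : {p : ℝ × ℝ | p.2 = a} = (univ : Set ℝ) ×ˢ ({a} : Set ℝ) := by
    ext ⟨x, y⟩; simp [eq_comm]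
  rw [h, Measure.volume_eq_prod, Measure.prod_prod]
  simp

lemma null_graph (δ : ℝ) : (volume : Measure (ℝ × ℝ)) {p | p.2 = p.1 * δ} = 0 := by
  have hm : MeasurableSet {p : ℝ × ℝ | p.2 = p.1 * δ} :=
    measurableSet_eq_fun measurable_snd (measurable_fst.mul_const δ)
  rw [Measure.volume_eq_prod, Measure.prod_apply hm]
  have h : ∀ x : ℝ, (volume : Measure ℝ) (Prod.mk x ⁻¹' {p : ℝ × ℝ | p.2 = p.1 * δ}) = 0 := by
    intro x
    have : Prod.mk x ⁻¹' {p : ℝ × ℝ | p.2 = p.1 * δ} = {x * δ} := by ext y; simp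
    rw [this]; simp
  simp [h]

lemma null_fst_mul {δ c : ℝ} (hc : c ≠ 0) :
    (volume : Measure (ℝ × ℝ)) {p : ℝ × ℝ | p.1 * δ = c} = 0 := by
  by_cases h : δ = 0
  · have : {p : ℝ × ℝ | p.1 * δ = c} = ∅ := by
      ext p; simp [h, hc.symm]
    rw [this]; exact measure_empty
  · refine measure_mono_null ?_ (null_vert (c / δ))
    intro p hp
    simp only [Set.mem_setOf_eq] at hp ⊢
    field_simp [h, ← hp, mul_comm]
    exact hp

lemma ae_eq_of_sandwich {A B C : Set (ℝ × ℝ)} (hAB : A ⊆ B) (hBC : B ⊆ C)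
    (h : (volume : Measure (ℝ × ℝ)) (C \ A) = 0) : B =ᵐ[(volume : Measure (ℝ × ℝ))] C := by
  rw [MeasureTheory.ae_eq_set]
  refine ⟨?_, measure_mono_null (Set.diff_subset_diff_right hAB) h⟩
  rw [Set.diff_eq_empty.mpr hBC]; exact measure_empty


open HOT

/-- Toll region for latency difference δ. -/
def Tset (τ δ : ℝ) : Set (ℝ × ℝ) := {p | τ ≤ p.1 * δ ∧ τ ≤ p.2}
/-- Pool region for latency difference δ. -/
def Pset (τ δ : ℝ) : Set (ℝ × ℝ) := {p | p.2 < τ ∧ p.2 ≤ p.1 * δ}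

lemma measT (τ δ : ℝ) : MeasurableSet (Tset τ δ) :=
  ((measurableSet_le measurable_const (measurable_fst.mul_const δ)).inter
    (measurableSet_le measurable_const measurable_snd))

lemma measP (τ δ : ℝ) : MeasurableSet (Pset τ δ) :=
  ((measurableSet_lt measurable_snd measurable_const).inter
    (measurableSet_le measurable_snd (measurable_fst.mul_const δ)))

lemma measR (βb γb : ℝ) : MeasurableSet (Rbox βb γb) :=
  measurableSet_Icc.prod measurableSet_Icc

lemma compactR (βb γb : ℝ) : IsCompact (Rbox βb γb) :=
  isCompact_Icc.prod isCompact_Icc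

lemma intOnR {βb γb : ℝ} {f : ℝ × ℝ → ℝ} (hfc : ContinuousOn f (Rbox βb γb)) :
    IntegrableOn f (Rbox βb γb) :=
  hfc.integrableOn_compact (compactR βb γb)

/-- toll share -/
noncomputable def gF (βb γb τ : ℝ) (f : ℝ × ℝ → ℝ) (δ : ℝ) : ℝ :=
  ∫ p in Rbox βb γb ∩ Tset τ δ, f p

/-- pool share -/
noncomputable def hF (βb γb τ : ℝ) (f : ℝ × ℝ → ℝ) (δ : ℝ) : ℝ :=
  ∫ p in Rbox βb γb ∩ Pset τ δ, f p

section Basic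

variable {βb γb τ : ℝ} {f : ℝ × ℝ → ℝ}

lemma int_nonneg (hf0 : ∀ p ∈ Rbox βb γb, 0 ≤ f p) {S : Set (ℝ × ℝ)}
    (hS : MeasurableSet S) : 0 ≤ ∫ p in Rbox βb γb ∩ S, f p :=
  setIntegral_nonneg ((measR βb γb).inter hS) fun p hp => hf0 p hp.1

lemma int_mono (hfc : ContinuousOn f (Rbox βb γb)) (hf0 : ∀ p ∈ Rbox βb γb, 0 ≤ f p)
    {S S' : Set (ℝ × ℝ)} (hS' : MeasurableSet S')
    (hsub : Rbox βb γb ∩ S ⊆ Rbox βb γb ∩ S') :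
    (∫ p in Rbox βb γb ∩ S, f p) ≤ ∫ p in Rbox βb γb ∩ S', f p := by
  refine setIntegral_mono_set ((intOnR hfc).mono_set inter_subset_left) ?_
    (HasSubset.Subset.eventuallyLE hsub)
  exact (ae_restrict_iff' ((measR βb γb).inter hS')).2
    (Filter.Eventually.of_forall fun p hp => hf0 p hp.1)

lemma int_congr_ae {S S' : Set (ℝ × ℝ)} (h : S =ᵐ[(volume : Measure (ℝ × ℝ))] S') :
    (∫ p in S, f p) = ∫ p in S', f p :=
  setIntegral_congr_set h

lemma gF_nonneg (hf0 : ∀ p ∈ Rbox βb γb, 0 ≤ f p) (δ : ℝ) : 0 ≤ gF βb γb τ f δ :=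
  int_nonneg hf0 (measT τ δ)

lemma hF_nonneg (hf0 : ∀ p ∈ Rbox βb γb, 0 ≤ f p) (δ : ℝ) : 0 ≤ hF βb γb τ f δ :=
  int_nonneg hf0 (measP τ δ)

lemma gF_mono (hfc : ContinuousOn f (Rbox βb γb)) (hf0 : ∀ p ∈ Rbox βb γb, 0 ≤ f p)
    {δ δ' : ℝ} (h : δ ≤ δ') : gF βb γb τ f δ ≤ gF βb γb τ f δ' := by
  refine int_mono hfc hf0 (measT τ δ') fun p hp => ⟨hp.1, ?_, hp.2.2⟩
  exact le_trans hp.2.1 (mul_le_mul_of_nonneg_left h hp.1.1.1)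

lemma hF_mono (hfc : ContinuousOn f (Rbox βb γb)) (hf0 : ∀ p ∈ Rbox βb γb, 0 ≤ f p)
    {δ δ' : ℝ} (h : δ ≤ δ') : hF βb γb τ f δ ≤ hF βb γb τ f δ' := by
  refine int_mono hfc hf0 (measP τ δ') fun p hp => ⟨hp.1, hp.2.1, ?_⟩
  exact le_trans hp.2.2 (mul_le_mul_of_nonneg_left h hp.1.1.1)

lemma TP_disj (τ δ : ℝ) : Disjoint (Tset τ δ) (Pset τ δ) :=
  Set.disjoint_left.2 fun p hpT hpP => absurd hpT.2 (not_le.2 hpP.1)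

lemma gF_add_hF_le_one (hfc : ContinuousOn f (Rbox βb γb))
    (hf0 : ∀ p ∈ Rbox βb γb, 0 ≤ f p)
    (hfint : (∫ p in Rbox βb γb, f p) = 1) (δ : ℝ) :
    gF βb γb τ f δ + hF βb γb τ f δ ≤ 1 := by
  have hunion : (∫ p in Rbox βb γb ∩ (Tset τ δ ∪ Pset τ δ), f p)
      = gF βb γb τ f δ + hF βb γb τ f δ := by
    rw [Set.inter_union_distrib_left]
    exact setIntegral_union ((TP_disj τ δ).mono inter_subset_right inter_subset_right)
      ((measR βb γb).inter (measP τ δ)) ((intOnR hfc).mono_set inter_subset_left)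
      ((intOnR hfc).mono_set inter_subset_left)
  calc gF βb γb τ f δ + hF βb γb τ f δ
      = ∫ p in Rbox βb γb ∩ (Tset τ δ ∪ Pset τ δ), f p := hunion.symm
    _ ≤ ∫ p in Rbox βb γb, f p := by
        refine setIntegral_mono_set (intOnR hfc) ?_
          (HasSubset.Subset.eventuallyLE inter_subset_left)
        exact (ae_restrict_iff' (measR βb γb)).2
          (Filter.Eventually.of_forall fun p hp => hf0 p hp)
    _ = 1 := hfint

lemma gF_zero (hτ : 0 < τ) : gF βb γb τ f 0 = 0 := by
  have : Rbox βb γb ∩ Tset τ 0 = ∅ := by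
    ext p; simp only [Set.mem_inter_iff, Set.mem_empty_iff_false, iff_false]
    rintro ⟨-, h1, -⟩
    rw [mul_zero] at h1; exact absurd (lt_of_lt_of_le hτ h1) (lt_irrefl 0)
  rw [gF, this, Measure.restrict_empty, integral_zero_measure]

lemma hF_zero (hτ : 0 < τ) : hF βb γb τ f 0 = 0 := by
  have hz : (volume : Measure (ℝ × ℝ)) (Rbox βb γb ∩ Pset τ 0) = 0 := by
    refine measure_mono_null ?_ (null_horiz 0)
    rintro p ⟨hpR, -, h2⟩
    exact le_antisymm (by simpa using h2) hpR.2.1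
  rw [hF, Measure.restrict_eq_zero.2 hz, integral_zero_measure]

end Basic

section Cont

variable {βb γb τ : ℝ} {f : ℝ × ℝ → ℝ}

/-- Generic continuity of `δ ↦ ∫_{Rbox ∩ S δ} f` via dominated convergence. -/
lemma cont_param (hfc : ContinuousOn f (Rbox βb γb)) {S : ℝ → Set (ℝ × ℝ)}
    (hSm : ∀ δ, MeasurableSet (S δ))
    (hloc : ∀ δ0 : ℝ, ∀ᵐ p : ℝ × ℝ, ∀ᶠ δ in nhds δ0, (p ∈ S δ ↔ p ∈ S δ0)) :
    Continuous (fun δ => ∫ p in Rbox βb γb ∩ S δ, f p) := by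
  rw [continuous_iff_continuousAt]
  intro δ0
  have hrw : ∀ δ, (∫ p in Rbox βb γb ∩ S δ, f p)
      = ∫ p in Rbox βb γb, (S δ).indicator f p := by
    intro δ; rw [setIntegral_indicator (hSm δ)]
  simp only [ContinuousAt, hrw]
  refine tendsto_integral_filter_of_dominated_convergence (fun p => ‖f p‖)
    (Filter.Eventually.of_forall fun δ =>
      (hfc.aestronglyMeasurable (measR βb γb)).indicator (hSm δ))
    (Filter.Eventually.of_forall fun δ =>
      Filter.Eventually.of_forall fun p => norm_indicator_le_norm_self f p)
    (intOnR hfc).norm ?_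
  refine Filter.Eventually.filter_mono (MeasureTheory.ae_mono Measure.restrict_le_self) ?_
  filter_upwards [hloc δ0] with p hp
  refine Filter.Tendsto.congr' ?_ tendsto_const_nhds
  filter_upwards [hp] with δ hδ
  by_cases h0 : p ∈ S δ0
  · rw [Set.indicator_of_mem h0 f, Set.indicator_of_mem (hδ.2 h0) f]
  · rw [Set.indicator_of_notMem h0 f, Set.indicator_of_notMem (fun h => h0 (hδ.1 h)) f]

lemma eventually_le_iff {c : ℝ} {g : ℝ → ℝ} {δ0 : ℝ} (hg : Continuous g)
    (hne : g δ0 ≠ c) : ∀ᶠ δ in nhds δ0, (c ≤ g δ ↔ c ≤ g δ0) := by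
  rcases lt_or_gt_of_ne hne with h | h
  · filter_upwards [(hg.tendsto δ0).eventually_lt_const h] with δ hδ
    simp [not_le.2 hδ, not_le.2 h]
  · filter_upwards [(hg.tendsto δ0).eventually_const_lt h] with δ hδ
    simp [le_of_lt hδ, le_of_lt h]

lemma gF_cont (hτ : 0 < τ) (hfc : ContinuousOn f (Rbox βb γb)) :
    Continuous (gF βb γb τ f) := by
  refine cont_param hfc (measT τ) fun δ0 => ?_
  have hnull : (volume : Measure (ℝ × ℝ)) {p : ℝ × ℝ | p.1 * δ0 = τ} = 0 := by
    by_cases h : δ0 = 0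
    · have : {p : ℝ × ℝ | p.1 * δ0 = τ} = ∅ := by
        ext p; simp [h, hτ.ne]
      rw [this]; exact measure_empty
    · refine measure_mono_null ?_ (null_vert (τ / δ0))
      intro p hp
      simp only [Set.mem_setOf_eq] at hp ⊢
      field_simp [h, ← hp, mul_comm]
      exact hp
    
  filter_upwards [MeasureTheory.compl_mem_ae_iff.mpr hnull] with p hp
  have hp' : p.1 * δ0 ≠ τ := hp
  filter_upwards [eventually_le_iff (continuous_const.mul continuous_id) hp'] with δ hδ
  exact and_congr hδ Iff.rfl

end Cont

section Cont2

variable {βb γb τ : ℝ} {f : ℝ × ℝ → ℝ}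

lemma hF_cont (hfc : ContinuousOn f (Rbox βb γb)) :
    Continuous (hF βb γb τ f) := by
  refine cont_param hfc (measP τ) fun δ0 => ?_
  have hnull : (volume : Measure (ℝ × ℝ)) {p : ℝ × ℝ | p.2 = p.1 * δ0} = 0 :=
    null_graph δ0
  filter_upwards [MeasureTheory.compl_mem_ae_iff.mpr hnull] with p hp
  have hp' : p.1 * δ0 ≠ p.2 := fun h => hp h.symm
  filter_upwards [eventually_le_iff (c := p.2) (continuous_const.mul continuous_id) hp']
    with δ hδ
  exact and_congr Iff.rfl hδ

end Cont2

section Phi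

variable (ℓo ℓh : ℝ → ℝ) (A : ℕ) (D τ βb γb : ℝ) (f : ℝ × ℝ → ℝ)

/-- The latency-difference response map. -/
noncomputable def Phi (δ : ℝ) : ℝ :=
  ℓo ((1 - (gF βb γb τ f δ + hF βb γb τ f δ)) * D)
    - ℓh ((gF βb γb τ f δ + hF βb γb τ f δ / (A : ℝ)) * D)

variable {ℓo ℓh A D τ βb γb f}

lemma xo_mem (hD : 0 < D) {g h : ℝ} (hg : 0 ≤ g) (hh : 0 ≤ h) (hgh : g + h ≤ 1) :
    (0:ℝ) ≤ (1 - (g + h)) * D :=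
  mul_nonneg (by linarith) hD.le

lemma xh_mem (hD : 0 < D) {g h : ℝ} (hg : 0 ≤ g) (hh : 0 ≤ h) :
    (0:ℝ) ≤ (g + h / (A : ℝ)) * D :=
  mul_nonneg (add_nonneg hg (div_nonneg hh (Nat.cast_nonneg A))) hD.le

end Phi

section PhiProps

variable {ℓo ℓh : ℝ → ℝ} {A : ℕ} {D τ βb γb : ℝ} {f : ℝ × ℝ → ℝ}

lemma Phi_anti (hD : 0 < D) (hA : 2 ≤ A)
    (hom : StrictMonoOn ℓo (Ici 0)) (hhm : StrictMonoOn ℓh (Ici 0))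
    (hfc : ContinuousOn f (Rbox βb γb)) (hf0 : ∀ p ∈ Rbox βb γb, 0 ≤ f p)
    (hfint : (∫ p in Rbox βb γb, f p) = 1) :
    Antitone (Phi ℓo ℓh A D τ βb γb f) := by
  intro δ δ' hδ
  have hg := gF_mono (τ := τ) hfc hf0 hδ
  have hh := hF_mono (τ := τ) hfc hf0 hδ
  have hg0 := gF_nonneg (τ := τ) hf0 δ
  have hg0' := gF_nonneg (τ := τ) hf0 δ'
  have hh0 := hF_nonneg (τ := τ) hf0 δ
  have hh0' := hF_nonneg (τ := τ) hf0 δ'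
  have hs := gF_add_hF_le_one (τ := τ) hfc hf0 hfint δ
  have hs' := gF_add_hF_le_one (τ := τ) hfc hf0 hfint δ'
  have hA0 : (0:ℝ) < (A : ℝ) := by
    have : (0:ℕ) < A := lt_of_lt_of_le (by norm_num) hA
    exact_mod_cast this
  unfold Phi
  have h1 : ℓo ((1 - (gF βb γb τ f δ' + hF βb γb τ f δ')) * D)
      ≤ ℓo ((1 - (gF βb γb τ f δ + hF βb γb τ f δ)) * D) := by
    refine hom.monotoneOn (Set.mem_Ici.2 (xo_mem hD hg0' hh0' hs'))
      (Set.mem_Ici.2 (xo_mem hD hg0 hh0 hs)) ?_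
    nlinarith
  have h2 : ℓh ((gF βb γb τ f δ + hF βb γb τ f δ / (A : ℝ)) * D)
      ≤ ℓh ((gF βb γb τ f δ' + hF βb γb τ f δ' / (A : ℝ)) * D) := by
    refine hhm.monotoneOn (Set.mem_Ici.2 (xh_mem hD hg0 hh0))
      (Set.mem_Ici.2 (xh_mem hD hg0' hh0')) ?_
    have : hF βb γb τ f δ / (A : ℝ) ≤ hF βb γb τ f δ' / (A : ℝ) :=
      div_le_div_of_nonneg_right hh hA0.le
    nlinarith
  linarith

lemma Phi_cont (hD : 0 < D) (hτ : 0 < τ)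
    (hoc : ContinuousOn ℓo (Ici 0)) (hhc : ContinuousOn ℓh (Ici 0))
    (hfc : ContinuousOn f (Rbox βb γb)) (hf0 : ∀ p ∈ Rbox βb γb, 0 ≤ f p)
    (hfint : (∫ p in Rbox βb γb, f p) = 1) :
    Continuous (Phi ℓo ℓh A D τ βb γb f) := by
  have hg := gF_cont (βb := βb) (γb := γb) (f := f) hτ hfc
  have hh := hF_cont (τ := τ) hfc
  have h1 : Continuous fun δ => (1 - (gF βb γb τ f δ + hF βb γb τ f δ)) * D :=
    ((continuous_const.sub (hg.add hh)).mul continuous_const)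
  have h2 : Continuous fun δ =>
      (gF βb γb τ f δ + hF βb γb τ f δ / (A : ℝ)) * D :=
    ((hg.add (hh.div_const _)).mul continuous_const)
  have c1 : Continuous fun δ => ℓo ((1 - (gF βb γb τ f δ + hF βb γb τ f δ)) * D) :=
    hoc.comp_continuous h1 fun δ => Set.mem_Ici.2
      (xo_mem hD (gF_nonneg hf0 δ) (hF_nonneg hf0 δ)
        (gF_add_hF_le_one hfc hf0 hfint δ))
  have c2 : Continuous fun δ =>
      ℓh ((gF βb γb τ f δ + hF βb γb τ f δ / (A : ℝ)) * D) :=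
    hhc.comp_continuous h2 fun δ => Set.mem_Ici.2
      (xh_mem hD (gF_nonneg hf0 δ) (hF_nonneg hf0 δ))
  exact c1.sub c2

lemma Phi_zero (hτ : 0 < τ) :
    Phi ℓo ℓh A D τ βb γb f 0 = ℓo D - ℓh 0 := by
  unfold Phi
  rw [gF_zero hτ, hF_zero hτ]
  norm_num

lemma exists_fixed (hD : 0 < D) (hA : 2 ≤ A) (hτ : 0 < τ)
    (hoc : ContinuousOn ℓo (Ici 0)) (hom : StrictMonoOn ℓo (Ici 0))
    (hhc : ContinuousOn ℓh (Ici 0)) (hhm : StrictMonoOn ℓh (Ici 0))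
    (hfree : ℓo 0 = ℓh 0)
    (hfc : ContinuousOn f (Rbox βb γb)) (hf0 : ∀ p ∈ Rbox βb γb, 0 ≤ f p)
    (hfint : (∫ p in Rbox βb γb, f p) = 1) :
    ∃ δ : ℝ, Phi ℓo ℓh A D τ βb γb f δ = δ := by
  set Φ := Phi ℓo ℓh A D τ βb γb f with hΦ
  have hanti : Antitone Φ := Phi_anti hD hA hom hhm hfc hf0 hfint
  have hcont : Continuous Φ := Phi_cont hD hτ hoc hhc hfc hf0 hfint
  have h0pos : 0 < Φ 0 := by
    rw [hΦ, Phi_zero hτ, ← hfree]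
    have := hom (Set.mem_Ici.2 le_rfl) (Set.mem_Ici.2 hD.le) hD
    linarith
  set M := Φ 0 + 1 with hM
  have hM0 : (0:ℝ) ≤ M := by linarith
  have hψM : Φ M - M ≤ -1 := by
    have := hanti hM0
    simp only [hM]; linarith
  have hψ0 : 0 < Φ 0 - 0 := by linarith
  have hIVT := intermediate_value_Icc' hM0
    (Continuous.continuousOn (hcont.sub continuous_id) :
      ContinuousOn (fun δ => Φ δ - δ) (Icc 0 M))
  have h0mem : (0:ℝ) ∈ Icc (Φ M - M) (Φ 0 - 0) := ⟨by linarith, by linarith⟩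
  obtain ⟨δ, -, hδ⟩ := hIVT h0mem
  refine ⟨δ, ?_⟩
  have hδ' : Φ δ - δ = 0 := hδ
  linarith

lemma fixed_unique (hD : 0 < D) (hA : 2 ≤ A)
    (hom : StrictMonoOn ℓo (Ici 0)) (hhm : StrictMonoOn ℓh (Ici 0))
    (hfc : ContinuousOn f (Rbox βb γb)) (hf0 : ∀ p ∈ Rbox βb γb, 0 ≤ f p)
    (hfint : (∫ p in Rbox βb γb, f p) = 1)
    {δ δ' : ℝ} (h : Phi ℓo ℓh A D τ βb γb f δ = δ)
    (h' : Phi ℓo ℓh A D τ βb γb f δ' = δ') : δ = δ' := by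
  have hanti : Antitone (Phi ℓo ℓh A D τ βb γb f) :=
    Phi_anti hD hA hom hhm hfc hf0 hfint
  by_contra hne
  rcases lt_or_gt_of_ne hne with hlt | hlt
  · have := hanti hlt.le; rw [h, h'] at this; exact absurd this (not_le.2 hlt)
  · have := hanti hlt.le; rw [h, h'] at this; exact absurd this (not_le.2 hlt)
end PhiProps

section Equil

variable {ℓo ℓh : ℝ → ℝ} {A : ℕ} {D τ βb γb : ℝ} {f : ℝ × ℝ → ℝ}

instance : Countable Action :=
  ⟨⟨fun a => match a with | Action.toll => 0 | Action.pool => 1 | Action.o => 2,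
    fun a b h => by cases a <;> cases b <;> simp_all⟩⟩

lemma measurableSet_action (S : Set Action) : MeasurableSet S := trivial

/-- The three strategy-distribution masses sum to 1. -/
lemma stratDist_sum (hfc : ContinuousOn f (Rbox βb γb))
    (hfint : (∫ p in Rbox βb γb, f p) = 1) {s : ℝ × ℝ → Action} (hs : Measurable s) :
    stratDist βb γb f s Action.toll + stratDist βb γb f s Action.pool
      + stratDist βb γb f s Action.o = 1 := by
  have hdisj1 : Disjoint (Rbox βb γb ∩ s ⁻¹' {Action.toll})
      (Rbox βb γb ∩ s ⁻¹' {Action.pool}) := by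
    refine Set.disjoint_left.2 fun p hp hp' => ?_
    have h1 : s p = Action.toll := hp.2
    have h2 : s p = Action.pool := hp'.2
    rw [h1] at h2; simp at h2
  have hdisj2 : Disjoint ((Rbox βb γb ∩ s ⁻¹' {Action.toll})
      ∪ (Rbox βb γb ∩ s ⁻¹' {Action.pool})) (Rbox βb γb ∩ s ⁻¹' {Action.o}) := by
    refine Set.disjoint_left.2 fun p hp hp' => ?_
    have h2 : s p = Action.o := hp'.2
    rcases hp with h | h
    · have h1 : s p = Action.toll := h.2; rw [h1] at h2; simp at h2
    · have h1 : s p = Action.pool := h.2; rw [h1] at h2; simp at h2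
  have hmeasp : ∀ a : Action, MeasurableSet (Rbox βb γb ∩ s ⁻¹' {a}) :=
    fun a => (measR βb γb).inter (hs (measurableSet_action {a}))
  have hcover : ((Rbox βb γb ∩ s ⁻¹' {Action.toll})
      ∪ (Rbox βb γb ∩ s ⁻¹' {Action.pool})) ∪ (Rbox βb γb ∩ s ⁻¹' {Action.o})
      = Rbox βb γb := by
    ext p
    simp only [Set.mem_union, Set.mem_inter_iff, Set.mem_preimage, Set.mem_singleton_iff]
    constructor
    · rintro ((h | h) | h) <;> exact h.1
    · intro hp; rcases hsp : s p with _ | _ | _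
      · exact Or.inl (Or.inl ⟨hp, rfl⟩)
      · exact Or.inl (Or.inr ⟨hp, rfl⟩)
      · exact Or.inr ⟨hp, rfl⟩
  have hint : ∀ S : Set (ℝ × ℝ), IntegrableOn f (Rbox βb γb ∩ S) :=
    fun S => (intOnR hfc).mono_set inter_subset_left
  have e1 : (∫ p in (Rbox βb γb ∩ s ⁻¹' {Action.toll})
      ∪ (Rbox βb γb ∩ s ⁻¹' {Action.pool}), f p)
      = stratDist βb γb f s Action.toll + stratDist βb γb f s Action.pool :=
    setIntegral_union hdisj1 (hmeasp Action.pool) (hint _) (hint _)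
  have e2 : (∫ p in ((Rbox βb γb ∩ s ⁻¹' {Action.toll})
      ∪ (Rbox βb γb ∩ s ⁻¹' {Action.pool})) ∪ (Rbox βb γb ∩ s ⁻¹' {Action.o}), f p)
      = (∫ p in (Rbox βb γb ∩ s ⁻¹' {Action.toll})
        ∪ (Rbox βb γb ∩ s ⁻¹' {Action.pool}), f p) + stratDist βb γb f s Action.o :=
    setIntegral_union hdisj2 (hmeasp Action.o) ((hint _).union (hint _)) (hint _)
  rw [hcover] at e2
  rw [hfint] at e2
  rw [e1] at e2
  linarith

end Equil

section Char

variable {ℓo ℓh : ℝ → ℝ} {A : ℕ} {D τ βb γb : ℝ} {f : ℝ × ℝ → ℝ}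

lemma wardrop_char (hτ : 0 < τ) (hfc : ContinuousOn f (Rbox βb γb))
    (hfint : (∫ p in Rbox βb γb, f p) = 1) {s : ℝ × ℝ → Action}
    (hW : IsWardrop ℓo ℓh A D τ βb γb f s) :
    stratDist βb γb f s Action.toll
        = gF βb γb τ f (ldiff ℓo ℓh A D (stratDist βb γb f s)) ∧
    stratDist βb γb f s Action.pool
        = hF βb γb τ f (ldiff ℓo ℓh A D (stratDist βb γb f s)) ∧
    Phi ℓo ℓh A D τ βb γb f (ldiff ℓo ℓh A D (stratDist βb γb f s))
        = ldiff ℓo ℓh A D (stratDist βb γb f s) := by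
  obtain ⟨hs, hmin⟩ := hW
  set σ := stratDist βb γb f s with hσ
  set δ := ldiff ℓo ℓh A D σ with hδ
  have hLoδ : ℓo (xo D σ) = ℓh (xh A D σ) + δ := by rw [hδ, ldiff]; ring
  have hmul : ∀ x : ℝ, x * ℓo (xo D σ) = x * ℓh (xh A D σ) + x * δ := by
    intro x; rw [hLoδ]; ring
  have key : ∀ p ∈ Rbox βb γb,
      (s p = Action.toll → τ ≤ p.1 * δ ∧ τ ≤ p.2) ∧
      (s p = Action.pool → p.2 ≤ τ ∧ p.2 ≤ p.1 * δ) ∧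
      (s p = Action.o → p.1 * δ ≤ τ ∧ p.1 * δ ≤ p.2) := by
    intro p hp
    have h1 := hmin p hp Action.toll
    have h2 := hmin p hp Action.pool
    have h3 := hmin p hp Action.o
    refine ⟨fun h => ?_, fun h => ?_, fun h => ?_⟩
    · rw [h] at h2 h3
      simp only [cost] at h2 h3
      exact ⟨by linarith [hmul p.1], by linarith⟩
    · rw [h] at h1 h3
      simp only [cost] at h1 h3
      exact ⟨by linarith, by linarith [hmul p.1]⟩
    · rw [h] at h1 h2
      simp only [cost] at h1 h2
      exact ⟨by linarith [hmul p.1], by linarith [hmul p.1]⟩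
  -- toll share
  have hsubT : Rbox βb γb ∩ s ⁻¹' {Action.toll} ⊆ Rbox βb γb ∩ Tset τ δ :=
    fun p hp => ⟨hp.1, (key p hp.1).1 hp.2⟩
  have hsupT : Rbox βb γb ∩ {p : ℝ × ℝ | τ < p.1 * δ ∧ τ < p.2}
      ⊆ Rbox βb γb ∩ s ⁻¹' {Action.toll} := by
    rintro p ⟨hp, h1, h2⟩
    refine ⟨hp, ?_⟩
    rcases hsp : s p with _ | _ | _
    · exact hsp
    · exact absurd ((key p hp).2.1 hsp).1 (not_le.2 h2)
    · exact absurd ((key p hp).2.2 hsp).1 (not_le.2 h1)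
  have hTnull : (volume : Measure (ℝ × ℝ))
      ((Rbox βb γb ∩ Tset τ δ) \ (Rbox βb γb ∩ {p : ℝ × ℝ | τ < p.1 * δ ∧ τ < p.2})) = 0 := by
    refine measure_mono_null ?_
      (measure_union_null (null_fst_mul (δ := δ) hτ.ne') (null_horiz τ))
    rintro p ⟨⟨hpR, ht1, ht2⟩, hnot⟩
    simp only [Set.mem_union, Set.mem_setOf_eq]
    by_contra hcon; push_neg at hcon
    exact hnot ⟨hpR, lt_of_le_of_ne ht1 (Ne.symm hcon.1), lt_of_le_of_ne ht2 (Ne.symm hcon.2)⟩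
  have etoll : σ Action.toll = gF βb γb τ f δ := by
    rw [hσ]
    exact setIntegral_congr_set (ae_eq_of_sandwich hsupT hsubT hTnull)
  -- pool share
  have hsubP : Rbox βb γb ∩ s ⁻¹' {Action.pool}
      ⊆ Rbox βb γb ∩ {p : ℝ × ℝ | p.2 ≤ τ ∧ p.2 ≤ p.1 * δ} :=
    fun p hp => ⟨hp.1, (key p hp.1).2.1 hp.2⟩
  have hsupP : Rbox βb γb ∩ {p : ℝ × ℝ | p.2 < τ ∧ p.2 < p.1 * δ}
      ⊆ Rbox βb γb ∩ s ⁻¹' {Action.pool} := by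
    rintro p ⟨hp, h1, h2⟩
    refine ⟨hp, ?_⟩
    rcases hsp : s p with _ | _ | _
    · exact absurd ((key p hp).1 hsp).2 (not_le.2 h1)
    · exact hsp
    · exact absurd ((key p hp).2.2 hsp).2 (not_le.2 h2)
  have hPnull : (volume : Measure (ℝ × ℝ))
      ((Rbox βb γb ∩ {p : ℝ × ℝ | p.2 ≤ τ ∧ p.2 ≤ p.1 * δ})
        \ (Rbox βb γb ∩ {p : ℝ × ℝ | p.2 < τ ∧ p.2 < p.1 * δ})) = 0 := by
    refine measure_mono_null ?_ (measure_union_null (null_horiz τ) (null_graph δ))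
    rintro p ⟨⟨hpR, ht1, ht2⟩, hnot⟩
    simp only [Set.mem_union, Set.mem_setOf_eq]
    by_contra hcon; push_neg at hcon
    exact hnot ⟨hpR, lt_of_le_of_ne ht1 hcon.1, lt_of_le_of_ne ht2 hcon.2⟩
  have epool : σ Action.pool = hF βb γb τ f δ := by
    rw [hσ]
    have e1 : (∫ p in Rbox βb γb ∩ s ⁻¹' {Action.pool}, f p)
        = ∫ p in Rbox βb γb ∩ {p : ℝ × ℝ | p.2 ≤ τ ∧ p.2 ≤ p.1 * δ}, f p :=
      setIntegral_congr_set (ae_eq_of_sandwich hsupP hsubP hPnull)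
    have e2 : (∫ p in Rbox βb γb ∩ Pset τ δ, f p)
        = ∫ p in Rbox βb γb ∩ {p : ℝ × ℝ | p.2 ≤ τ ∧ p.2 ≤ p.1 * δ}, f p := by
      refine setIntegral_congr_set (ae_eq_of_sandwich
        (C := Rbox βb γb ∩ {p : ℝ × ℝ | p.2 ≤ τ ∧ p.2 ≤ p.1 * δ})
        (A := Rbox βb γb ∩ {p : ℝ × ℝ | p.2 < τ ∧ p.2 < p.1 * δ})
        ?_ ?_ hPnull)
      · rintro p ⟨hp, h1, h2⟩; exact ⟨hp, h1, h2.le⟩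
      · rintro p ⟨hp, h1, h2⟩; exact ⟨hp, h1.le, h2⟩
    exact e1.trans e2.symm
  have ho : σ Action.o = 1 - (gF βb γb τ f δ + hF βb γb τ f δ) := by
    have hsum := stratDist_sum hfc hfint hs
    rw [← hσ] at hsum
    rw [← etoll, ← epool]; linarith
  refine ⟨etoll, epool, ?_⟩
  rw [hδ]
  show Phi ℓo ℓh A D τ βb γb f δ = ldiff ℓo ℓh A D σ
  rw [ldiff, xo, xh, etoll, epool, ho, Phi]

end Char

section Construct

variable {ℓo ℓh : ℝ → ℝ} {A : ℕ} {D βb γb : ℝ} {f : ℝ × ℝ → ℝ}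

/-- Candidate equilibrium profile for latency difference δ. -/
noncomputable def sStar (τ δ : ℝ) : ℝ × ℝ → Action := fun p =>
  if τ ≤ p.1 * δ ∧ τ ≤ p.2 then Action.toll
  else if p.2 < τ ∧ p.2 ≤ p.1 * δ then Action.pool else Action.o

variable {τ δ : ℝ}

lemma sStar_pre_toll : sStar τ δ ⁻¹' {Action.toll} = Tset τ δ := by
  ext p
  simp only [Set.mem_preimage, Set.mem_singleton_iff, sStar, Tset, Set.mem_setOf_eq]
  by_cases h1 : τ ≤ p.1 * δ ∧ τ ≤ p.2
  · simp [h1]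
  · by_cases h2 : p.2 < τ ∧ p.2 ≤ p.1 * δ <;> simp [h1, h2]

lemma sStar_pre_pool : sStar τ δ ⁻¹' {Action.pool} = Pset τ δ := by
  ext p
  simp only [Set.mem_preimage, Set.mem_singleton_iff, sStar, Pset, Set.mem_setOf_eq]
  by_cases h1 : τ ≤ p.1 * δ ∧ τ ≤ p.2
  · have : ¬ (p.2 < τ ∧ p.2 ≤ p.1 * δ) := fun h => absurd h1.2 (not_le.2 h.1)
    simp [h1, this]
  · by_cases h2 : p.2 < τ ∧ p.2 ≤ p.1 * δ <;> simp [h1, h2]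

lemma sStar_pre_o : sStar τ δ ⁻¹' {Action.o} = (Tset τ δ ∪ Pset τ δ)ᶜ := by
  ext p
  simp only [Set.mem_preimage, Set.mem_singleton_iff, sStar, Tset, Pset,
    Set.mem_compl_iff, Set.mem_union, Set.mem_setOf_eq]
  by_cases h1 : τ ≤ p.1 * δ ∧ τ ≤ p.2
  · simp [h1]
  · by_cases h2 : p.2 < τ ∧ p.2 ≤ p.1 * δ <;> simp [h1, h2]

lemma sStar_meas : Measurable (sStar τ δ) := by
  refine measurable_to_countable' fun a => ?_
  rcases a with _ | _ | _
  · rw [sStar_pre_toll]; exact measT τ δ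
  · rw [sStar_pre_pool]; exact measP τ δ
  · rw [sStar_pre_o]; exact ((measT τ δ).union (measP τ δ)).compl

lemma sStar_dist_toll :
    stratDist βb γb f (sStar τ δ) Action.toll = gF βb γb τ f δ := by
  rw [stratDist, gF, sStar_pre_toll]

lemma sStar_dist_pool :
    stratDist βb γb f (sStar τ δ) Action.pool = hF βb γb τ f δ := by
  rw [stratDist, hF, sStar_pre_pool]

lemma sStar_dist_o (hfc : ContinuousOn f (Rbox βb γb))
    (hfint : (∫ p in Rbox βb γb, f p) = 1) :
    stratDist βb γb f (sStar τ δ) Action.o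
      = 1 - (gF βb γb τ f δ + hF βb γb τ f δ) := by
  have hsum := stratDist_sum hfc hfint (sStar_meas (τ := τ) (δ := δ))
  rw [sStar_dist_toll, sStar_dist_pool] at hsum
  linarith

lemma sStar_ldiff (hfc : ContinuousOn f (Rbox βb γb))
    (hfint : (∫ p in Rbox βb γb, f p) = 1)
    (hfix : Phi ℓo ℓh A D τ βb γb f δ = δ) :
    ldiff ℓo ℓh A D (stratDist βb γb f (sStar τ δ)) = δ := by
  rw [ldiff, xo, xh, sStar_dist_toll, sStar_dist_pool, sStar_dist_o hfc hfint]
  exact hfix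

lemma sStar_wardrop (hfc : ContinuousOn f (Rbox βb γb))
    (hfint : (∫ p in Rbox βb γb, f p) = 1)
    (hfix : Phi ℓo ℓh A D τ βb γb f δ = δ) :
    IsWardrop ℓo ℓh A D τ βb γb f (sStar τ δ) := by
  refine ⟨sStar_meas, fun p hp a => ?_⟩
  set σ := stratDist βb γb f (sStar τ δ) with hσ
  have hld : ℓo (xo D σ) = ℓh (xh A D σ) + δ := by
    have := sStar_ldiff (ℓo := ℓo) (ℓh := ℓh) (A := A) (D := D) hfc hfint hfix
    rw [ldiff] at this; rw [hσ]; linarith [this]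
  have hmul : ∀ x : ℝ, x * ℓo (xo D σ) = x * ℓh (xh A D σ) + x * δ := by
    intro x; rw [hld]; ring
  by_cases h1 : τ ≤ p.1 * δ ∧ τ ≤ p.2
  · have hsp : sStar τ δ p = Action.toll := by simp [sStar, h1]
    rw [hsp]
    rcases a with _ | _ | _
    · exact le_rfl
    · simp only [cost]; linarith [h1.2]
    · simp only [cost]; linarith [hmul p.1, h1.1]
  · by_cases h2 : p.2 < τ ∧ p.2 ≤ p.1 * δ
    · have hsp : sStar τ δ p = Action.pool := by simp [sStar, h1, h2]
      rw [hsp]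
      rcases a with _ | _ | _
      · simp only [cost]; linarith [h2.1.le]
      · exact le_rfl
      · simp only [cost]; linarith [hmul p.1, h2.2]
    · have hsp : sStar τ δ p = Action.o := by simp [sStar, h1, h2]
      push_neg at h1 h2
      have hd1 : p.1 * δ ≤ τ := by
        by_contra hcon; push_neg at hcon
        have ht2 : p.2 < τ := h1 hcon.le
        exact absurd (h2 ht2) (not_lt.2 (le_trans ht2.le hcon.le))
      have hd2 : p.1 * δ ≤ p.2 := by
        by_contra hcon; push_neg at hcon
        have ht2 : p.2 < τ := lt_of_lt_of_le hcon (le_trans hd1 le_rfl)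
        exact absurd (h2 ht2) (not_lt.2 hcon.le)
      rw [hsp]
      rcases a with _ | _ | _
      · simp only [cost]; linarith [hmul p.1, hd1]
      · simp only [cost]; linarith [hmul p.1, hd2]
      · exact le_rfl

end Construct

end HOTAux

open HOT

/-- existence of a Wardrop equilibrium and uniqueness of the
equilibrium strategy distribution (Theorem 1, uniqueness part). -/
theorem stmt2
    (ℓo ℓh : ℝ → ℝ) (A : ℕ) (D τ βb γb : ℝ) (f : ℝ × ℝ → ℝ)
    (hD : 0 < D) (hA : 2 ≤ A) (hβb : 0 < βb) (hγb : 0 < γb)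
    (hoc : ContinuousOn ℓo (Ici 0)) (hom : StrictMonoOn ℓo (Ici 0))
    (hhc : ContinuousOn ℓh (Ici 0)) (hhm : StrictMonoOn ℓh (Ici 0))
    (hfree : ℓo 0 = ℓh 0)
    (hfc : ContinuousOn f (Rbox βb γb)) (hfpos : ∀ p ∈ Rbox βb γb, 0 < f p)
    (hfint : (∫ p in Rbox βb γb, f p) = 1)
    (hτ : 0 < τ) :
    (∃ s : ℝ × ℝ → Action, IsWardrop ℓo ℓh A D τ βb γb f s) ∧
    (∀ s s' : ℝ × ℝ → Action,
      IsWardrop ℓo ℓh A D τ βb γb f s → IsWardrop ℓo ℓh A D τ βb γb f s' →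
      stratDist βb γb f s = stratDist βb γb f s' ∧
      ldiff ℓo ℓh A D (stratDist βb γb f s) =
        ldiff ℓo ℓh A D (stratDist βb γb f s')) := by
  have hf0 : ∀ p ∈ Rbox βb γb, 0 ≤ f p := fun p hp => (hfpos p hp).le
  obtain ⟨δs, hδs⟩ :=
    HOTAux.exists_fixed hD hA hτ hoc hom hhc hhm hfree hfc hf0 hfint
  constructor
  · exact ⟨HOTAux.sStar τ δs, HOTAux.sStar_wardrop hfc hfint hδs⟩
  · intro s s' hw hw'
    obtain ⟨et, ep, hfix⟩ := HOTAux.wardrop_char hτ hfc hfint hw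
    obtain ⟨et', ep', hfix'⟩ := HOTAux.wardrop_char hτ hfc hfint hw'
    have hδeq : ldiff ℓo ℓh A D (stratDist βb γb f s)
        = ldiff ℓo ℓh A D (stratDist βb γb f s') :=
      HOTAux.fixed_unique hD hA hom hhm hfc hf0 hfint hfix hfix'
    have ho := HOTAux.stratDist_sum hfc hfint hw.1
    have ho' := HOTAux.stratDist_sum hfc hfint hw'.1
    have hteq : stratDist βb γb f s Action.toll
        = stratDist βb γb f s' Action.toll := by rw [et, et', hδeq]
    have hpeq : stratDist βb γb f s Action.pool
        = stratDist βb γb f s' Action.pool := by rw [ep, ep', hδeq]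
    have hoeq : stratDist βb γb f s Action.o
        = stratDist βb γb f s' Action.o := by linarith
    have hdist : stratDist βb γb f s = stratDist βb γb f s' := by
      funext a; rcases a with _ | _ | _
      · exact hteq
      · exact hpeq
      · exact hoeq
    exact ⟨hdist, by rw [hdist]⟩
end

section
/- Assume τ > 0 and β̄·ℓ† ≤ min{τ, γ̄} (sub-regime A-1). Then there is exactly one z ∈ [0,1] satisfying z = ∫₀^β̄ ∫₀^{max{0, min{(ℓ_o((1−z)·D) − ℓ_h(z·D/A))·β, γ̄}}} f(β,γ) dγ dβ; this z satisfies z ≤ σ†_pool, and every Wardrop equilibrium has strategy distribution (σ_toll, σ_pool, σ_o) = (0, z, 1−z). -/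
open MeasureTheory Set

open HOT

namespace HOTAux
open intervalIntegral

lemma graph_null (c : ℝ → ℝ) (hc : Measurable c) :
    (volume : Measure (ℝ × ℝ)) {p : ℝ × ℝ | p.2 = c p.1} = 0 := by
  have hms : MeasurableSet {p : ℝ × ℝ | p.2 = c p.1} :=
    measurableSet_eq_fun measurable_snd (hc.comp measurable_fst)
  rw [MeasureTheory.Measure.volume_eq_prod ℝ ℝ, MeasureTheory.Measure.measure_prod_null hms]
  filter_upwards with x
  have h1 : Prod.mk x ⁻¹' {p : ℝ × ℝ | p.2 = c p.1} = {c x} := by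
    ext y; simp [Set.mem_preimage]
  simp [h1]

lemma vline_null (b : ℝ) :
    (volume : Measure (ℝ × ℝ)) {p : ℝ × ℝ | p.1 = b} = 0 := by
  have h1 : {p : ℝ × ℝ | p.1 = b} = ({b} : Set ℝ) ×ˢ (univ : Set ℝ) := by
    ext p
    simp only [Set.mem_setOf_eq, Set.mem_prod, Set.mem_singleton_iff, Set.mem_univ, and_true]
  rw [MeasureTheory.Measure.volume_eq_prod ℝ ℝ, h1, MeasureTheory.Measure.prod_prod]
  simp

lemma setIntegral_null {f : ℝ × ℝ → ℝ} {S : Set (ℝ × ℝ)}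
    (h : (volume : Measure (ℝ × ℝ)) S = 0) : ∫ p in S, f p = 0 := by
  rw [MeasureTheory.Measure.restrict_eq_zero.mpr h]
  exact integral_zero_measure f

/-- strict and non-strict sub-graph regions have the same integral. -/
lemma lt_eq_le {βb γb : ℝ} (g : ℝ × ℝ → ℝ) (c : ℝ → ℝ) (hc : Measurable c) :
    ∫ p in Rbox βb γb ∩ {p : ℝ × ℝ | p.2 < c p.1}, g p
      = ∫ p in Rbox βb γb ∩ {p : ℝ × ℝ | p.2 ≤ c p.1}, g p := by
  apply setIntegral_congr_set
  rw [MeasureTheory.ae_eq_set]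
  refine ⟨measure_mono_null ?_ (graph_null c hc), measure_mono_null ?_ (graph_null c hc)⟩
  · intro p hp
    simp only [Set.mem_diff, Set.mem_inter_iff, Set.mem_setOf_eq] at hp
    exact absurd ⟨hp.1.1, hp.1.2.le⟩ hp.2
  · intro p hp
    simp only [Set.mem_diff, Set.mem_inter_iff, Set.mem_setOf_eq] at hp
    have h2 : ¬ p.2 < c p.1 := fun h => hp.2 ⟨hp.1.1, h⟩
    exact le_antisymm hp.1.2 (not_lt.mp h2)

/-- Fubini for the region under a graph inside the box. -/
lemma regionIntegral {βb γb : ℝ} (hβb : 0 ≤ βb)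
    (g : ℝ × ℝ → ℝ) (hg : Continuous g) (c : ℝ → ℝ) (hc : Continuous c)
    (hcb : ∀ β ∈ Icc (0:ℝ) βb, c β ∈ Icc (0:ℝ) γb) :
    ∫ p in Rbox βb γb ∩ {p : ℝ × ℝ | p.2 ≤ c p.1}, g p
      = ∫ β in (0:ℝ)..βb, ∫ γ in (0:ℝ)..(c β), g (β, γ) := by
  have hS : MeasurableSet {p : ℝ × ℝ | p.2 ≤ c p.1} :=
    measurableSet_le measurable_snd (hc.measurable.comp measurable_fst)
  have hbox : IsCompact (Rbox βb γb) := isCompact_Icc.prod isCompact_Icc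
  have hint : IntegrableOn g (Rbox βb γb) := hg.continuousOn.integrableOn_compact hbox
  have hind : IntegrableOn ({p : ℝ × ℝ | p.2 ≤ c p.1}.indicator g) (Rbox βb γb) :=
    hint.indicator hS
  have step1 : ∫ p in Rbox βb γb ∩ {p : ℝ × ℝ | p.2 ≤ c p.1}, g p
      = ∫ p in Rbox βb γb, ({p : ℝ × ℝ | p.2 ≤ c p.1}.indicator g) p :=
    (setIntegral_indicator hS).symm
  rw [step1]
  have step2 : ∫ p in Rbox βb γb, ({p : ℝ × ℝ | p.2 ≤ c p.1}.indicator g) p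
      = ∫ β in Icc (0:ℝ) βb, ∫ γ in Icc (0:ℝ) γb,
          ({p : ℝ × ℝ | p.2 ≤ c p.1}.indicator g) (β, γ) := by
    rw [show Rbox βb γb = Icc (0:ℝ) βb ×ˢ Icc (0:ℝ) γb from rfl] at hind ⊢
    rw [MeasureTheory.Measure.volume_eq_prod ℝ ℝ] at hind ⊢
    exact MeasureTheory.setIntegral_prod _ hind
  rw [step2]
  have step3 : ∫ β in Icc (0:ℝ) βb, ∫ γ in Icc (0:ℝ) γb,
        ({p : ℝ × ℝ | p.2 ≤ c p.1}.indicator g) (β, γ)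
      = ∫ β in Icc (0:ℝ) βb, ∫ γ in (0:ℝ)..(c β), g (β, γ) := by
    apply setIntegral_congr_fun measurableSet_Icc
    intro β hβ
    have hc0 : (0:ℝ) ≤ c β := (hcb β hβ).1
    have hcγ : c β ≤ γb := (hcb β hβ).2
    have h1 : ∀ γ : ℝ, ({p : ℝ × ℝ | p.2 ≤ c p.1}.indicator g) (β, γ)
        = (Iic (c β)).indicator (fun γ => g (β, γ)) γ := by
      intro γ
      by_cases h : γ ≤ c β
      · rw [Set.indicator_of_mem (by exact h) g, Set.indicator_of_mem (by exact h)]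
      · rw [Set.indicator_of_notMem (by exact h) g, Set.indicator_of_notMem (by exact h)]
    simp only [h1]
    rw [setIntegral_indicator measurableSet_Iic]
    have h2 : Icc (0:ℝ) γb ∩ Iic (c β) = Icc (0:ℝ) (c β) := by
      ext γ; simp only [Set.mem_inter_iff, Set.mem_Icc, Set.mem_Iic]
      constructor
      · rintro ⟨⟨h3, _⟩, h5⟩; exact ⟨h3, h5⟩
      · rintro ⟨h3, h4⟩; exact ⟨⟨h3, h4.trans hcγ⟩, h4⟩
    rw [h2, MeasureTheory.integral_Icc_eq_integral_Ioc, ← integral_of_le hc0]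
  rw [step3, MeasureTheory.integral_Icc_eq_integral_Ioc, ← integral_of_le hβb]

/-- Continuity of the fixed-point map. -/
lemma Phi_cont_s4 {βb γb : ℝ} (g : ℝ × ℝ → ℝ) (hg : Continuous g)
    (δf : ℝ → ℝ) (hδ : Continuous δf) :
    Continuous (fun z => ∫ β in (0:ℝ)..βb,
      ∫ γ in (0:ℝ)..(max 0 (min (δf z * β) γb)), g (β, γ)) := by
  have hGcont : Continuous (fun q : ℝ × ℝ =>
      ∫ γ in (0:ℝ)..(max 0 (min (δf q.1 * q.2) γb)), g (q.2, γ)) := by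
    apply intervalIntegral.continuous_parametric_intervalIntegral_of_continuous
      (f := fun (q : ℝ × ℝ) (γ : ℝ) => g (q.2, γ))
    · exact hg.comp ((continuous_snd.comp continuous_fst).prodMk continuous_snd)
    · exact continuous_const.max ((((hδ.comp continuous_fst).mul continuous_snd)).min
        continuous_const)
  exact intervalIntegral.continuous_parametric_intervalIntegral_of_continuous'
    (f := fun (z : ℝ) (β : ℝ) =>
      ∫ γ in (0:ℝ)..(max 0 (min (δf z * β) γb)), g (β, γ)) hGcont 0 βb

/-- The inner primitive, as a function of β, is continuous (hence integrable). -/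
lemma inner_cont (g : ℝ × ℝ → ℝ) (hg : Continuous g) (c : ℝ → ℝ)
    (hc : Continuous c) :
    Continuous (fun β => ∫ γ in (0:ℝ)..(c β), g (β, γ)) := by
  apply intervalIntegral.continuous_parametric_intervalIntegral_of_continuous
    (f := fun (β : ℝ) (γ : ℝ) => g (β, γ))
  · exact hg.comp (continuous_fst.prodMk continuous_snd)
  · exact hc

end HOTAux

/-- sub-regime A-1 — unique fixed point z of the carpool equation on
[0,1]; z ≤ σ†_pool; every equilibrium distribution is (0, z, 1 − z). -/
theorem stmt4
    (ℓo ℓh : ℝ → ℝ) (A : ℕ) (D τ βb γb : ℝ) (f : ℝ × ℝ → ℝ)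
    (hD : 0 < D) (hA : 2 ≤ A) (hβb : 0 < βb) (hγb : 0 < γb)
    (hoc : ContinuousOn ℓo (Ici 0)) (hom : StrictMonoOn ℓo (Ici 0))
    (hhc : ContinuousOn ℓh (Ici 0)) (hhm : StrictMonoOn ℓh (Ici 0))
    (hfree : ℓo 0 = ℓh 0)
    (hfc : ContinuousOn f (Rbox βb γb)) (hfpos : ∀ p ∈ Rbox βb γb, 0 < f p)
    (hfint : (∫ p in Rbox βb γb, f p) = 1)
    (hτ : 0 < τ)
    (hreg : βb * ellDagger ℓo ℓh A D βb γb τ f ≤ min τ γb) :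
    ∃ z : ℝ,
      (z ∈ Icc (0:ℝ) 1 ∧
        z = ∫ β in (0:ℝ)..βb,
              ∫ γ in (0:ℝ)..
                  (max 0 (min ((ℓo ((1 - z) * D) - ℓh (z * D / (A : ℝ))) * β) γb)),
                f (β, γ)) ∧
      (∀ z' : ℝ, z' ∈ Icc (0:ℝ) 1 →
        z' = (∫ β in (0:ℝ)..βb,
              ∫ γ in (0:ℝ)..
                  (max 0 (min ((ℓo ((1 - z') * D) - ℓh (z' * D / (A : ℝ))) * β) γb)),
                f (β, γ)) → z' = z) ∧
      z ≤ sigmaDagger βb γb τ f ∧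
      (∀ s : ℝ × ℝ → Action, IsWardrop ℓo ℓh A D τ βb γb f s →
        stratDist βb γb f s Action.toll = 0 ∧
        stratDist βb γb f s Action.pool = z ∧
        stratDist βb γb f s Action.o = 1 - z) := by
  classical
  have hβb0 : (0:ℝ) ≤ βb := hβb.le
  have hγb0 : (0:ℝ) ≤ γb := hγb.le
  have hA0 : (0:ℝ) < (A:ℝ) := by
    have : 0 < A := by omega
    exact_mod_cast this
  set t : ℝ := min τ γb with ht_def
  have htpos : 0 < t := lt_min hτ hγb
  have htτ : t ≤ τ := min_le_left _ _
  have htγ : t ≤ γb := min_le_right _ _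
  -- the clamped (globally defined) density
  set proj : ℝ × ℝ → ℝ × ℝ := fun p => (min (max p.1 0) βb, min (max p.2 0) γb)
    with hproj_def
  have hprojcont : Continuous proj := by
    rw [hproj_def]; fun_prop
  have hprojmem : ∀ p, proj p ∈ Rbox βb γb := by
    intro p
    exact ⟨⟨le_min (le_max_right _ _) hβb0, min_le_right _ _⟩,
      ⟨le_min (le_max_right _ _) hγb0, min_le_right _ _⟩⟩
  have hprojid : ∀ p ∈ Rbox βb γb, proj p = p := by
    rintro ⟨a, b⟩ ⟨⟨ha0, ha1⟩, hb0, hb1⟩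
    simp only [hproj_def]
    rw [max_eq_left ha0, min_eq_left ha1, max_eq_left hb0, min_eq_left hb1]
  set g : ℝ × ℝ → ℝ := fun p => f (proj p) with hg_def
  have hgcont : Continuous g := hfc.comp_continuous hprojcont hprojmem
  have hgf : ∀ p ∈ Rbox βb γb, g p = f p := by
    intro p hp
    simp only [hg_def, hprojid p hp]
  have hgpos : ∀ p, 0 < g p := fun p => hfpos _ (hprojmem p)
  have hg0 : ∀ p, 0 ≤ g p := fun p => (hgpos p).le
  -- the clamped latencies
  set lo : ℝ → ℝ := fun x => ℓo (max x 0) with hlo_def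
  set lh : ℝ → ℝ := fun x => ℓh (max x 0) with hlh_def
  have hlocont : Continuous lo :=
    hoc.comp_continuous (continuous_id.max continuous_const) (fun x => mem_Ici.mpr (le_max_right _ _))
  have hlhcont : Continuous lh :=
    hhc.comp_continuous (continuous_id.max continuous_const) (fun x => mem_Ici.mpr (le_max_right _ _))
  have hlo_eq : ∀ x : ℝ, 0 ≤ x → lo x = ℓo x := by
    intro x hx; simp only [hlo_def, max_eq_left hx]
  have hlh_eq : ∀ x : ℝ, 0 ≤ x → lh x = ℓh x := by
    intro x hx; simp only [hlh_def, max_eq_left hx]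
  have hlomono : Monotone lo := by
    intro a b hab
    rcases eq_or_lt_of_le (max_le_max hab (le_refl (0:ℝ))) with h | h
    · simp only [hlo_def]; rw [h]
    · exact (hom (le_max_right a 0) (le_max_right b 0) h).le
  have hlhmono : Monotone lh := by
    intro a b hab
    rcases eq_or_lt_of_le (max_le_max hab (le_refl (0:ℝ))) with h | h
    · simp only [hlh_def]; rw [h]
    · exact (hhm (le_max_right a 0) (le_max_right b 0) h).le
  set δf : ℝ → ℝ := fun z => lo ((1 - z) * D) - lh (z * D / (A : ℝ)) with hδf_def
  have hδfval : ∀ z : ℝ, δf z = lo ((1 - z) * D) - lh (z * D / (A : ℝ)) := fun z => rfl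
  have hδfcont : Continuous δf := by
    rw [hδf_def]
    apply Continuous.sub
    · exact hlocont.comp (by fun_prop)
    · exact hlhcont.comp (by fun_prop)
  have hδfanti : Antitone δf := by
    intro a b hab
    rw [hδfval a, hδfval b]
    have h1 : lo ((1 - b) * D) ≤ lo ((1 - a) * D) :=
      hlomono (mul_le_mul_of_nonneg_right (by linarith) hD.le)
    have h2 : lh (a * D / A) ≤ lh (b * D / A) := by
      apply hlhmono
      have : a * D ≤ b * D := mul_le_mul_of_nonneg_right hab hD.le
      exact (div_le_div_iff_of_pos_right hA0).mpr this
    linarith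
  have hδfagree : ∀ z ∈ Icc (0:ℝ) 1,
      δf z = ℓo ((1 - z) * D) - ℓh (z * D / (A : ℝ)) := by
    intro z hz
    rw [hδfval, hlo_eq _ (mul_nonneg (by linarith [hz.2]) hD.le),
      hlh_eq _ (div_nonneg (mul_nonneg hz.1 hD.le) hA0.le)]
  -- the fixed-point map
  set Φ : ℝ → ℝ := fun z => ∫ β in (0:ℝ)..βb,
    ∫ γ in (0:ℝ)..(max 0 (min (δf z * β) γb)), g (β, γ) with hΦ_def
  have hΦval : ∀ z : ℝ, Φ z = ∫ β in (0:ℝ)..βb,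
      ∫ γ in (0:ℝ)..(max 0 (min (δf z * β) γb)), g (β, γ) := fun z => rfl
  have hΦcont : Continuous Φ := by
    rw [hΦ_def]; exact HOTAux.Phi_cont_s4 g hgcont δf hδfcont
  have hcap_mem : ∀ δ β : ℝ, max 0 (min (δ * β) γb) ∈ Icc (0:ℝ) γb :=
    fun δ β => ⟨le_max_left _ _, max_le hγb0 (min_le_right _ _)⟩
  have hinner_cont : ∀ δ : ℝ,
      Continuous (fun β => ∫ γ in (0:ℝ)..(max 0 (min (δ * β) γb)), g (β, γ)) := by
    intro δ
    exact HOTAux.inner_cont g hgcont _ (by fun_prop)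
  have hslice_cont : ∀ β : ℝ, Continuous (fun γ => g (β, γ)) := by
    intro β
    exact hgcont.comp (continuous_const.prodMk continuous_id)
  have hΦnonneg : ∀ z, 0 ≤ Φ z := by
    intro z
    rw [hΦval]
    apply intervalIntegral.integral_nonneg hβb0
    intro β _
    exact intervalIntegral.integral_nonneg (le_max_left _ _) (fun γ _ => hg0 _)
  have hΦanti : Antitone Φ := by
    intro a b hab
    rw [hΦval a, hΦval b]
    apply intervalIntegral.integral_mono_on hβb0
      ((hinner_cont (δf b)).intervalIntegrable 0 βb)
      ((hinner_cont (δf a)).intervalIntegrable 0 βb)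
    intro β hβ
    have hcapm : max 0 (min (δf b * β) γb) ≤ max 0 (min (δf a * β) γb) :=
      max_le_max le_rfl (min_le_min
        (mul_le_mul_of_nonneg_right (hδfanti hab) hβ.1) le_rfl)
    exact intervalIntegral.integral_mono_interval le_rfl (le_max_left _ _) hcapm
      (ae_of_all _ (fun γ => hg0 _)) ((hslice_cont β).intervalIntegrable _ _)
  have hδf1neg : δf 1 < 0 := by
    rw [hδfval]
    have e0 : (1 - 1 : ℝ) * D = 0 := by ring
    have e1 : lo ((1 - 1 : ℝ) * D) = ℓo 0 := by rw [e0, hlo_eq _ le_rfl]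
    have e2 : lh ((1:ℝ) * D / A) = ℓh (D / A) := by
      rw [hlh_eq _ (by positivity), one_mul]
    have e3 : ℓh 0 < ℓh (D / A) :=
      hhm (le_refl (0:ℝ)) (le_of_lt (show (0:ℝ) < D / A by positivity)) (by positivity)
    rw [e1, e2]
    linarith [hfree]
  have hΦ1 : Φ 1 = 0 := by
    rw [hΦval]
    have : ∫ β in (0:ℝ)..βb,
        (∫ γ in (0:ℝ)..(max 0 (min (δf 1 * β) γb)), g (β, γ))
        = ∫ β in (0:ℝ)..βb, (0:ℝ) := by
      apply intervalIntegral.integral_congr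
      intro β hβ
      rw [uIcc_of_le hβb0] at hβ
      have hcap : max 0 (min (δf 1 * β) γb) = 0 :=
        max_eq_left ((min_le_left _ _).trans
          (mul_nonpos_iff.mpr (Or.inr ⟨hδf1neg.le, hβ.1⟩)))
      show (∫ γ in (0:ℝ)..(max 0 (min (δf 1 * β) γb)), g (β, γ)) = 0
      rw [hcap, intervalIntegral.integral_same]
    rw [this]
    simp
  set G : ℝ → ℝ := fun z => z - Φ z with hG_def
  have hGval : ∀ z, G z = z - Φ z := fun z => rfl
  have hGsm : StrictMono G := by
    intro a b hab
    have := hΦanti hab.le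
    rw [hGval, hGval]
    linarith
  have hGcont : Continuous G := by
    rw [hG_def]; exact continuous_id.sub hΦcont
  have h0mem : (0:ℝ) ∈ Icc (G 0) (G 1) := by
    constructor
    · rw [hGval]; linarith [hΦnonneg 0]
    · rw [hGval, hΦ1]; norm_num
  obtain ⟨z, hz01, hGz⟩ :=
    intermediate_value_Icc (zero_le_one (α := ℝ)) hGcont.continuousOn h0mem
  have hzfix : z = Φ z := by
    rw [hGval] at hGz; linarith
  -- transfer between the statement's map (with f, ℓo, ℓh) and Φ
  have hΨΦ : ∀ z' ∈ Icc (0:ℝ) 1,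
      (∫ β in (0:ℝ)..βb,
        ∫ γ in (0:ℝ)..
            (max 0 (min ((ℓo ((1 - z') * D) - ℓh (z' * D / (A : ℝ))) * β) γb)),
          f (β, γ)) = Φ z' := by
    intro z' hz'
    rw [hΦval]
    apply intervalIntegral.integral_congr
    intro β hβ
    rw [uIcc_of_le hβb0] at hβ
    rw [← hδfagree z' hz']
    apply intervalIntegral.integral_congr
    intro γ hγ
    rw [uIcc_of_le (le_max_left _ _)] at hγ
    have hmem : (β, γ) ∈ Rbox βb γb :=
      ⟨hβ, ⟨hγ.1, hγ.2.trans (hcap_mem (δf z') β).2⟩⟩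
    exact (hgf (β, γ) hmem).symm
  -- σ† facts
  set σd : ℝ := sigmaDagger βb γb τ f with hσd_def
  have hcdag_mem : ∀ β ∈ Icc (0:ℝ) βb, t * β / βb ∈ Icc (0:ℝ) γb := by
    intro β hβ
    constructor
    · have := hβ.1; positivity
    · rw [div_le_iff₀ hβb]
      calc t * β ≤ t * βb := mul_le_mul_of_nonneg_left hβ.2 htpos.le
        _ ≤ γb * βb := mul_le_mul_of_nonneg_right htγ hβb0
  have hσd_iter_g : σd = ∫ β in (0:ℝ)..βb, ∫ γ in (0:ℝ)..(t * β / βb), g (β, γ) := by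
    rw [hσd_def]
    unfold sigmaDagger
    rw [← ht_def]
    apply intervalIntegral.integral_congr
    intro β hβ
    rw [uIcc_of_le hβb0] at hβ
    apply intervalIntegral.integral_congr
    intro γ hγ
    rw [uIcc_of_le (hcdag_mem β hβ).1] at hγ
    have hmem : (β, γ) ∈ Rbox βb γb :=
      ⟨hβ, ⟨hγ.1, hγ.2.trans (hcdag_mem β hβ).2⟩⟩
    exact (hgf (β, γ) hmem).symm
  have hcdagcont : Continuous (fun β : ℝ => t * β / βb) := by fun_prop
  have hσd_set : σd = ∫ p in Rbox βb γb ∩ {p : ℝ × ℝ | p.2 ≤ t * p.1 / βb}, g p := by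
    rw [hσd_iter_g,
      HOTAux.regionIntegral hβb0 g hgcont (fun β => t * β / βb) hcdagcont hcdag_mem]
  have hboxm : MeasurableSet (Rbox βb γb) := measurableSet_Icc.prod measurableSet_Icc
  have hcompact : IsCompact (Rbox βb γb) := isCompact_Icc.prod isCompact_Icc
  have hIg : IntegrableOn g (Rbox βb γb) := hgcont.continuousOn.integrableOn_compact hcompact
  have hIf : IntegrableOn f (Rbox βb γb) := hfc.integrableOn_compact hcompact
  have hboxg : ∫ p in Rbox βb γb, g p = 1 := by
    rw [setIntegral_congr_fun hboxm (fun p hp => hgf p hp)]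
    exact hfint
  have hcdagm : MeasurableSet {p : ℝ × ℝ | p.2 ≤ t * p.1 / βb} :=
    measurableSet_le measurable_snd (by fun_prop)
  have hσd0 : 0 ≤ σd := by
    rw [hσd_set]
    exact setIntegral_nonneg (hboxm.inter hcdagm) (fun p _ => hg0 p)
  have hσd1 : σd ≤ 1 := by
    rw [hσd_set, ← hboxg]
    exact setIntegral_mono_set hIg (ae_of_all _ hg0)
      (HasSubset.Subset.eventuallyLE inter_subset_left)
  have hσdell : δf σd = ellDagger ℓo ℓh A D βb γb τ f := by
    rw [hδfagree σd ⟨hσd0, hσd1⟩]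
    unfold ellDagger
    rw [← hσd_def, show σd * D / (A:ℝ) = σd / (A:ℝ) * D from by ring]
  have hℓdag : δf σd ≤ t / βb := by
    rw [hσdell, le_div_iff₀ hβb]
    linarith [hreg]
  have hΦσd : Φ σd ≤ σd := by
    have hstep : Φ σd ≤ ∫ β in (0:ℝ)..βb, ∫ γ in (0:ℝ)..(t * β / βb), g (β, γ) := by
      rw [hΦval]
      apply intervalIntegral.integral_mono_on hβb0
        ((hinner_cont (δf σd)).intervalIntegrable 0 βb)
        ((HOTAux.inner_cont g hgcont (fun β => t * β / βb) hcdagcont).intervalIntegrable 0 βb)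
      intro β hβ
      have hcaple : max 0 (min (δf σd * β) γb) ≤ t * β / βb := by
        apply max_le (hcdag_mem β hβ).1
        calc min (δf σd * β) γb ≤ δf σd * β := min_le_left _ _
          _ ≤ (t / βb) * β := mul_le_mul_of_nonneg_right hℓdag hβ.1
          _ = t * β / βb := by ring
      exact intervalIntegral.integral_mono_interval le_rfl (le_max_left _ _) hcaple
        (ae_of_all _ (fun γ => hg0 _)) ((hslice_cont β).intervalIntegrable _ _)
    rw [← hσd_iter_g] at hstep
    exact hstep
  have hzσd : z ≤ σd := by
    by_contra hcon
    push_neg at hcon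
    have h1 := hGsm hcon
    rw [hGz, hGval] at h1
    linarith [hΦσd]
  refine ⟨z, ⟨hz01, ?_⟩, ?_, hzσd, ?_⟩
  · rw [hΨΦ z hz01]; exact hzfix
  · intro z' hz' heq
    apply hGsm.injective
    rw [hGz, hGval]
    rw [hΨΦ z' hz'] at heq
    linarith
  -- the equilibrium part
  intro s hW
  obtain ⟨hmeas, hopt⟩ := hW
  set σ := stratDist βb γb f s with hσ_def
  set δ : ℝ := ℓo (xo D σ) - ℓh (xh A D σ) with hδ_def
  have hSm : ∀ a : Action, MeasurableSet (Rbox βb γb ∩ s ⁻¹' {a}) :=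
    fun a => hboxm.inter (hmeas MeasurableSpace.measurableSet_top)
  have hIa : ∀ a : Action, IntegrableOn f (Rbox βb γb ∩ s ⁻¹' {a}) :=
    fun a => hIf.mono_set inter_subset_left
  have hσa : ∀ a : Action, σ a = ∫ p in Rbox βb γb ∩ s ⁻¹' {a}, f p := fun a => rfl
  have hσnn : ∀ a, 0 ≤ σ a := by
    intro a; rw [hσa a]
    exact setIntegral_nonneg (hSm a) (fun p hp => (hfpos p hp.1).le)
  have hfnn_ae : ∀ a : Action, 0 ≤ᵐ[volume.restrict (Rbox βb γb ∩ s ⁻¹' {a})] f := by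
    intro a
    exact MeasureTheory.ae_restrict_of_forall_mem (hSm a)
      (fun p hp => (hfpos p hp.1).le)
  have hsum : σ Action.toll + σ Action.pool + σ Action.o = 1 := by
    have hu : (Rbox βb γb ∩ s ⁻¹' {Action.toll}) ∪
        ((Rbox βb γb ∩ s ⁻¹' {Action.pool}) ∪ (Rbox βb γb ∩ s ⁻¹' {Action.o}))
        = Rbox βb γb := by
      ext p
      simp only [Set.mem_union, Set.mem_inter_iff, Set.mem_preimage, Set.mem_singleton_iff]
      constructor
      · rintro (⟨hp, -⟩ | ⟨hp, -⟩ | ⟨hp, -⟩) <;> exact hp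
      · intro hp
        rcases h : s p with _ | _ | _
        · exact Or.inl ⟨hp, rfl⟩
        · exact Or.inr (Or.inl ⟨hp, rfl⟩)
        · exact Or.inr (Or.inr ⟨hp, rfl⟩)
    have hd1 : Disjoint (Rbox βb γb ∩ s ⁻¹' {Action.pool})
        (Rbox βb γb ∩ s ⁻¹' {Action.o}) := by
      rw [Set.disjoint_left]
      rintro p ⟨-, h1⟩ ⟨-, h2⟩
      simp only [Set.mem_preimage, Set.mem_singleton_iff] at h1 h2
      rw [h1] at h2
      cases h2
    have hd2 : Disjoint (Rbox βb γb ∩ s ⁻¹' {Action.toll})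
        ((Rbox βb γb ∩ s ⁻¹' {Action.pool}) ∪ (Rbox βb γb ∩ s ⁻¹' {Action.o})) := by
      rw [Set.disjoint_left]
      rintro p ⟨-, h1⟩ (⟨-, h2⟩ | ⟨-, h2⟩) <;>
        · simp only [Set.mem_preimage, Set.mem_singleton_iff] at h1 h2
          rw [h1] at h2
          cases h2
    have e : ∫ p in (Rbox βb γb ∩ s ⁻¹' {Action.toll}) ∪
        ((Rbox βb γb ∩ s ⁻¹' {Action.pool}) ∪ (Rbox βb γb ∩ s ⁻¹' {Action.o})), f p
        = σ Action.toll + (σ Action.pool + σ Action.o) := by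
      rw [MeasureTheory.setIntegral_union hd2 ((hSm _).union (hSm _)) (hIa _)
        ((hIa _).union (hIa _)),
        MeasureTheory.setIntegral_union hd1 (hSm _) (hIa _) (hIa _)]
      rw [hσa, hσa, hσa]
    rw [hu] at e
    rw [hfint] at e
    linarith
  -- basic cost consequences
  have key : ∀ p ∈ Rbox βb γb,
      (s p = Action.pool → p.2 ≤ p.1 * δ) ∧
      (s p = Action.toll → τ ≤ p.1 * δ) ∧
      (s p = Action.o → p.1 * δ ≤ p.2) ∧
      (p.2 < τ → p.2 < p.1 * δ → s p = Action.pool) := by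
    intro p hp
    have hδexp : p.1 * δ = p.1 * ℓo (xo D σ) - p.1 * ℓh (xh A D σ) := by
      rw [hδ_def]; ring
    refine ⟨?_, ?_, ?_, ?_⟩
    · intro hsp
      have h := hopt p hp Action.o
      rw [hsp] at h
      have h' : p.1 * ℓh (xh A D σ) + p.2 ≤ p.1 * ℓo (xo D σ) := h
      linarith
    · intro hsp
      have h := hopt p hp Action.o
      rw [hsp] at h
      have h' : p.1 * ℓh (xh A D σ) + τ ≤ p.1 * ℓo (xo D σ) := h
      linarith
    · intro hsp
      have h := hopt p hp Action.pool
      rw [hsp] at h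
      have h' : p.1 * ℓo (xo D σ) ≤ p.1 * ℓh (xh A D σ) + p.2 := h
      linarith
    · intro h1 h2
      rcases hsp : s p with _ | _ | _
      · exfalso
        have h := hopt p hp Action.pool
        rw [hsp] at h
        have h' : p.1 * ℓh (xh A D σ) + τ ≤ p.1 * ℓh (xh A D σ) + p.2 := h
        linarith
      · rfl
      · exfalso
        have h := hopt p hp Action.pool
        rw [hsp] at h
        have h' : p.1 * ℓo (xo D σ) ≤ p.1 * ℓh (xh A D σ) + p.2 := h
        linarith
  -- the equilibrium latency difference is small (sub-regime A-1)
  have hδt : βb * δ ≤ t := by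
    by_contra hcon
    push_neg at hcon
    have hδpos : 0 < δ := by
      rcases le_or_gt δ 0 with h | h
      · exfalso
        have : βb * δ ≤ 0 := mul_nonpos_iff.mpr (Or.inl ⟨hβb0, h⟩)
        linarith
      · exact h
    have htβδ : t / βb < δ := (div_lt_iff₀ hβb).mpr (by linarith)
    -- σ† ≤ σ_pool
    have hsub1 : Rbox βb γb ∩ {p : ℝ × ℝ | p.2 < t * p.1 / βb}
        ⊆ Rbox βb γb ∩ s ⁻¹' {Action.pool} := by
      rintro p ⟨hp, hlt⟩
      simp only [Set.mem_setOf_eq] at hlt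
      have hp2 : 0 ≤ p.2 := hp.2.1
      have hp1 : 0 ≤ p.1 := hp.1.1
      have hp1b : p.1 ≤ βb := hp.1.2
      have hp1pos : 0 < p.1 := by
        by_contra h
        push_neg at h
        have h0 : p.1 = 0 := le_antisymm h hp1
        rw [h0] at hlt
        simp at hlt
        linarith
      have hγτ : p.2 < τ := by
        have hle : t * p.1 / βb ≤ t := by
          rw [div_le_iff₀ hβb]
          exact mul_le_mul_of_nonneg_left hp1b htpos.le
        linarith
      have hγδ : p.2 < p.1 * δ := by
        calc p.2 < t * p.1 / βb := hlt
          _ = (t / βb) * p.1 := by ring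
          _ < δ * p.1 := mul_lt_mul_of_pos_right htβδ hp1pos
          _ = p.1 * δ := by ring
      refine ⟨hp, ?_⟩
      simp only [Set.mem_preimage, Set.mem_singleton_iff]
      exact (key p hp).2.2.2 hγτ hγδ
    have hltm : MeasurableSet {p : ℝ × ℝ | p.2 < t * p.1 / βb} :=
      measurableSet_lt measurable_snd (by fun_prop)
    have e1 : σd = ∫ p in Rbox βb γb ∩ {p : ℝ × ℝ | p.2 < t * p.1 / βb}, f p := by
      rw [hσd_set, ← HOTAux.lt_eq_le g (fun β => t * β / βb) (by fun_prop)]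
      exact (setIntegral_congr_fun (hboxm.inter hltm) (fun p hp => (hgf p hp.1).symm)).symm
    have hmain1 : σd ≤ σ Action.pool := by
      rw [e1, hσa]
      exact setIntegral_mono_set (hIa Action.pool) (hfnn_ae Action.pool)
        (HasSubset.Subset.eventuallyLE hsub1)
    -- σ_o ≤ 1 - σ†
    have hgem : MeasurableSet {p : ℝ × ℝ | t * p.1 / βb ≤ p.2} :=
      measurableSet_le (by fun_prop) measurable_snd
    have hsplit : (∫ p in Rbox βb γb ∩ {p : ℝ × ℝ | p.2 < t * p.1 / βb}, f p)
        + (∫ p in Rbox βb γb ∩ {p : ℝ × ℝ | t * p.1 / βb ≤ p.2}, f p) = 1 := by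
      have hu2 : (Rbox βb γb ∩ {p : ℝ × ℝ | p.2 < t * p.1 / βb}) ∪
          (Rbox βb γb ∩ {p : ℝ × ℝ | t * p.1 / βb ≤ p.2}) = Rbox βb γb := by
        ext p
        simp only [Set.mem_union, Set.mem_inter_iff, Set.mem_setOf_eq]
        constructor
        · rintro (⟨hp, -⟩ | ⟨hp, -⟩) <;> exact hp
        · intro hp
          rcases lt_or_ge p.2 (t * p.1 / βb) with h | h
          · exact Or.inl ⟨hp, h⟩
          · exact Or.inr ⟨hp, h⟩
      have hd : Disjoint (Rbox βb γb ∩ {p : ℝ × ℝ | p.2 < t * p.1 / βb})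
          (Rbox βb γb ∩ {p : ℝ × ℝ | t * p.1 / βb ≤ p.2}) := by
        rw [Set.disjoint_left]
        rintro p ⟨-, h1⟩ ⟨-, h2⟩
        simp only [Set.mem_setOf_eq] at h1 h2
        linarith
      rw [← MeasureTheory.setIntegral_union hd (hboxm.inter hgem)
        (hIf.mono_set inter_subset_left) (hIf.mono_set inter_subset_left), hu2]
      exact hfint
    have hsub2 : Rbox βb γb ∩ s ⁻¹' {Action.o}
        ⊆ Rbox βb γb ∩ {p : ℝ × ℝ | t * p.1 / βb ≤ p.2} := by
      rintro p ⟨hp, hsp⟩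
      simp only [Set.mem_preimage, Set.mem_singleton_iff] at hsp
      refine ⟨hp, ?_⟩
      simp only [Set.mem_setOf_eq]
      have h1 := (key p hp).2.2.1 hsp
      calc t * p.1 / βb = (t / βb) * p.1 := by ring
        _ ≤ δ * p.1 := mul_le_mul_of_nonneg_right htβδ.le hp.1.1
        _ = p.1 * δ := by ring
        _ ≤ p.2 := h1
    have hmain2 : σ Action.o ≤ 1 - σd := by
      have h2 : σ Action.o ≤ ∫ p in Rbox βb γb ∩ {p : ℝ × ℝ | t * p.1 / βb ≤ p.2}, f p := by
        rw [hσa]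
        exact setIntegral_mono_set (hIf.mono_set inter_subset_left)
          ((MeasureTheory.ae_restrict_iff' (hboxm.inter hgem)).mpr
            (ae_of_all _ (fun p hp => (hfpos p hp.1).le)))
          (HasSubset.Subset.eventuallyLE hsub2)
      rw [← e1] at hsplit
      linarith
    -- flows and latencies comparison
    have hxo0 : 0 ≤ xo D σ := mul_nonneg (hσnn _) hD.le
    have hxole : xo D σ ≤ (1 - σd) * D := by
      have : xo D σ = σ Action.o * D := rfl
      rw [this]
      exact mul_le_mul_of_nonneg_right hmain2 hD.le
    have hxh0 : (0:ℝ) ≤ σd / A * D := by positivity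
    have hxhge : σd / A * D ≤ xh A D σ := by
      have hx : xh A D σ = (σ Action.toll + σ Action.pool / A) * D := rfl
      rw [hx]
      have h1 : σd / A ≤ σ Action.pool / A := (div_le_div_iff_of_pos_right hA0).mpr hmain1
      have h2 : σd / A ≤ σ Action.toll + σ Action.pool / A := by
        linarith [hσnn Action.toll]
      exact mul_le_mul_of_nonneg_right h2 hD.le
    have hLole : ℓo (xo D σ) ≤ ℓo ((1 - σd) * D) := by
      rcases eq_or_lt_of_le hxole with h | h
      · rw [h]
      · exact (hom (mem_Ici.mpr hxo0)
          (mem_Ici.mpr (mul_nonneg (by linarith) hD.le)) h).le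
    have hLhge : ℓh (σd / A * D) ≤ ℓh (xh A D σ) := by
      rcases eq_or_lt_of_le hxhge with h | h
      · rw [h]
      · exact (hhm (mem_Ici.mpr hxh0) (mem_Ici.mpr (hxh0.trans hxhge)) h).le
    have hδled : δ ≤ ellDagger ℓo ℓh A D βb γb τ f := by
      have hell : ellDagger ℓo ℓh A D βb γb τ f
          = ℓo ((1 - σd) * D) - ℓh (σd / A * D) := rfl
      rw [hδ_def, hell]
      linarith
    have hfin := mul_le_mul_of_nonneg_left hδled hβb0
    linarith
  -- no one tolls
  have hδτβ : ∀ p ∈ Rbox βb γb, s p = Action.toll → p.1 = βb := by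
    intro p hp hsp
    have h1 := (key p hp).2.1 hsp
    have hδpos : 0 < δ := by
      by_contra h
      push_neg at h
      have : p.1 * δ ≤ 0 := mul_nonpos_iff.mpr (Or.inl ⟨hp.1.1, h⟩)
      linarith
    have h2 : p.1 * δ ≤ βb * δ := mul_le_mul_of_nonneg_right hp.1.2 hδpos.le
    have h3 : p.1 * δ = βb * δ := le_antisymm h2 (by linarith)
    exact mul_right_cancel₀ (ne_of_gt hδpos) h3
  have hσt0 : σ Action.toll = 0 := by
    rw [hσa]
    apply HOTAux.setIntegral_null
    apply measure_mono_null _ (HOTAux.vline_null βb)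
    rintro p ⟨hp, hsp⟩
    simp only [Set.mem_preimage, Set.mem_singleton_iff] at hsp
    exact hδτβ p hp hsp
  -- the carpool share is the fixed point
  have hz'0 : 0 ≤ σ Action.pool := hσnn _
  have hσo_eq : σ Action.o = 1 - σ Action.pool := by linarith
  have hz'1 : σ Action.pool ≤ 1 := by
    have := hσnn Action.o
    linarith
  have hδz' : δ = δf (σ Action.pool) := by
    have e1 : xo D σ = (1 - σ Action.pool) * D := by
      have : xo D σ = σ Action.o * D := rfl
      rw [this, hσo_eq]
    have e2 : xh A D σ = σ Action.pool * D / A := by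
      have : xh A D σ = (σ Action.toll + σ Action.pool / A) * D := rfl
      rw [this, hσt0]
      ring
    rw [hδ_def, hδfval, e1, e2,
      hlo_eq _ (mul_nonneg (by linarith) hD.le),
      hlh_eq _ (div_nonneg (mul_nonneg hz'0 hD.le) hA0.le)]
  have hsand1 : Rbox βb γb ∩ {p : ℝ × ℝ | p.2 < δ * p.1}
      ⊆ Rbox βb γb ∩ s ⁻¹' {Action.pool} := by
    rintro p ⟨hp, hlt⟩
    simp only [Set.mem_setOf_eq] at hlt
    have hδppos : 0 < δ * p.1 := lt_of_le_of_lt hp.2.1 hlt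
    have hδpos : 0 < δ := by
      by_contra h
      push_neg at h
      have : δ * p.1 ≤ 0 := mul_nonpos_iff.mpr (Or.inr ⟨h, hp.1.1⟩)
      linarith
    have hγτ : p.2 < τ := by
      have hstep : δ * p.1 ≤ δ * βb := mul_le_mul_of_nonneg_left hp.1.2 hδpos.le
      have hcomm : βb * δ = δ * βb := mul_comm _ _
      linarith
    refine ⟨hp, ?_⟩
    simp only [Set.mem_preimage, Set.mem_singleton_iff]
    exact (key p hp).2.2.2 hγτ (by linarith [hlt, mul_comm δ p.1])
  have hsand2 : Rbox βb γb ∩ s ⁻¹' {Action.pool}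
      ⊆ Rbox βb γb ∩ {p : ℝ × ℝ | p.2 ≤ δ * p.1} := by
    rintro p ⟨hp, hsp⟩
    simp only [Set.mem_preimage, Set.mem_singleton_iff] at hsp
    refine ⟨hp, ?_⟩
    simp only [Set.mem_setOf_eq]
    have := (key p hp).1 hsp
    linarith [mul_comm δ p.1]
  have e_pool : σ Action.pool = ∫ p in Rbox βb γb ∩ {p : ℝ × ℝ | p.2 ≤ δ * p.1}, f p := by
    rw [hσa]
    apply setIntegral_congr_set
    rw [MeasureTheory.ae_eq_set]
    constructor
    · apply measure_mono_null _ (HOTAux.graph_null (fun β => δ * β) (by fun_prop))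
      intro p hp
      exact absurd (hsand2 hp.1) hp.2
    · apply measure_mono_null _ (HOTAux.graph_null (fun β => δ * β) (by fun_prop))
      rintro p ⟨hple, hnp⟩
      have h2 : ¬ (p.2 < δ * p.1) := fun h => hnp (hsand1 ⟨hple.1, h⟩)
      exact le_antisymm hple.2 (not_lt.mp h2)
  have hcapcont : Continuous (fun β : ℝ => max 0 (min (δ * β) γb)) := by fun_prop
  have hcapsm : MeasurableSet {p : ℝ × ℝ | p.2 ≤ max 0 (min (δ * p.1) γb)} :=
    measurableSet_le measurable_snd (hcapcont.measurable.comp measurable_fst)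
  have e_cap : ∫ p in Rbox βb γb ∩ {p : ℝ × ℝ | p.2 ≤ δ * p.1}, f p
      = ∫ p in Rbox βb γb ∩ {p : ℝ × ℝ | p.2 ≤ max 0 (min (δ * p.1) γb)}, f p := by
    apply setIntegral_congr_set
    rw [MeasureTheory.ae_eq_set]
    constructor
    · apply measure_mono_null _ (HOTAux.graph_null (fun _ => (0:ℝ)) measurable_const)
      rintro p ⟨⟨hpbox, hle⟩, hnot⟩
      exfalso
      apply hnot
      refine ⟨hpbox, ?_⟩
      simp only [Set.mem_setOf_eq] at hle ⊢
      exact (le_min hle hpbox.2.2).trans (le_max_right _ _)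
    · apply measure_mono_null _ (HOTAux.graph_null (fun _ => (0:ℝ)) measurable_const)
      rintro p ⟨⟨hpbox, hcap⟩, hnot⟩
      simp only [Set.mem_setOf_eq] at hcap
      have hgt : δ * p.1 < p.2 := by
        by_contra h
        push_neg at h
        exact hnot ⟨hpbox, h⟩
      have hcap0 : max 0 (min (δ * p.1) γb) = 0 := by
        rcases le_total (min (δ * p.1) γb) 0 with h | h
        · exact max_eq_left h
        · exfalso
          rw [max_eq_right h] at hcap
          have := min_le_left (δ * p.1) γb
          linarith
      show p.2 = (fun _ => (0:ℝ)) p.1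
      simp only
      rw [hcap0] at hcap
      exact le_antisymm hcap hpbox.2.1
  have e_iter : ∫ p in Rbox βb γb ∩ {p : ℝ × ℝ | p.2 ≤ max 0 (min (δ * p.1) γb)}, f p
      = Φ (σ Action.pool) := by
    rw [setIntegral_congr_fun (hboxm.inter hcapsm) (fun p hp => (hgf p hp.1).symm)]
    rw [HOTAux.regionIntegral hβb0 g hgcont _ hcapcont (fun β _ => hcap_mem δ β)]
    rw [hΦval, hδz']
  have hz'fix : σ Action.pool = Φ (σ Action.pool) :=
    e_pool.trans (e_cap.trans e_iter)
  have hz'z : σ Action.pool = z := by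
    apply hGsm.injective
    rw [hGz, hGval]
    linarith
  refine ⟨hσt0, hz'z, ?_⟩
  rw [hσo_eq, hz'z]
end

section
/- Assume 0 < τ < min{γ̄, β̄·ℓ†} (regime B). Then every Wardrop equilibrium has all three actions used by a positive mass of agents: σ*_toll > 0, σ*_pool > 0, and σ*_o > 0. -/
open MeasureTheory Set

open HOT

lemma setIntegral_zero_of_null {f : ℝ × ℝ → ℝ} {T : Set (ℝ×ℝ)} (h : volume T = 0) :
    ∫ p in T, f p = 0 := by
  rw [Measure.restrict_eq_zero.2 h, integral_zero_measure]

lemma graph_measurable (βb : ℝ) (g : ℝ → ℝ) (hgm : Measurable g) :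
    MeasurableSet {p : ℝ × ℝ | p.1 ∈ Ioc 0 βb ∧ p.2 ∈ Ioc 0 (g p.1)} := by
  have : {p : ℝ × ℝ | p.1 ∈ Ioc 0 βb ∧ p.2 ∈ Ioc 0 (g p.1)} = (Prod.fst ⁻¹' Ioc (0:ℝ) βb) ∩
      ({p : ℝ × ℝ | 0 < p.2} ∩ {p : ℝ × ℝ | p.2 ≤ g p.1}) := by
    ext p; simp [Set.mem_Ioc, and_assoc]
  rw [this]
  exact (measurable_fst measurableSet_Ioc).inter
    ((measurableSet_lt measurable_const measurable_snd).inter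
      (measurableSet_le measurable_snd (hgm.comp measurable_fst)))

lemma fubini_aux (f : ℝ × ℝ → ℝ) (βb : ℝ) (g : ℝ → ℝ) (hβb : 0 ≤ βb)
    (hg : ∀ β ∈ Ioc (0:ℝ) βb, 0 ≤ g β) (hgm : Measurable g)
    (hfi : IntegrableOn f {p : ℝ × ℝ | p.1 ∈ Ioc 0 βb ∧ p.2 ∈ Ioc 0 (g p.1)}) :
    ∫ β in (0:ℝ)..βb, ∫ γ in (0:ℝ)..(g β), f (β, γ) =
      ∫ p in {p : ℝ × ℝ | p.1 ∈ Ioc 0 βb ∧ p.2 ∈ Ioc 0 (g p.1)}, f p := by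
  set S : Set (ℝ × ℝ) := {p : ℝ × ℝ | p.1 ∈ Ioc 0 βb ∧ p.2 ∈ Ioc 0 (g p.1)} with hSdef
  have hSm : MeasurableSet S := graph_measurable βb g hgm
  have hfi2 : Integrable (S.indicator f) (Measure.prod volume volume) := by
    rw [← Measure.volume_eq_prod]
    exact (integrable_indicator_iff hSm).2 hfi
  have key : ∀ x : ℝ, (∫ y, S.indicator f (x, y)) =
      (Ioc (0:ℝ) βb).indicator (fun x => ∫ y in Ioc (0:ℝ) (g x), f (x, y)) x := by
    intro x
    by_cases hx : x ∈ Ioc (0:ℝ) βb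
    · rw [indicator_of_mem hx]
      have h1 : ∀ y, S.indicator f (x, y) = (Ioc (0:ℝ) (g x)).indicator (fun y => f (x, y)) y := by
        intro y
        by_cases hy : y ∈ Ioc (0:ℝ) (g x)
        · rw [indicator_of_mem hy, indicator_of_mem (by exact ⟨hx, hy⟩)]
        · rw [indicator_of_notMem hy, indicator_of_notMem (by intro h; exact hy h.2)]
      rw [integral_congr_ae (Filter.Eventually.of_forall h1), integral_indicator measurableSet_Ioc]
    · rw [indicator_of_notMem hx]
      have h1 : ∀ y : ℝ, S.indicator f (x, y) = 0 := by
        intro y; exact indicator_of_notMem (by intro h; exact hx h.1) _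
      rw [integral_congr_ae (Filter.Eventually.of_forall h1), integral_zero]
  calc ∫ β in (0:ℝ)..βb, ∫ γ in (0:ℝ)..(g β), f (β, γ)
      = ∫ β in Ioc (0:ℝ) βb, ∫ γ in (0:ℝ)..(g β), f (β, γ) :=
        intervalIntegral.integral_of_le hβb
    _ = ∫ β in Ioc (0:ℝ) βb, ∫ γ in Ioc (0:ℝ) (g β), f (β, γ) := by
        refine setIntegral_congr_fun measurableSet_Ioc (fun β hβ => ?_)
        exact intervalIntegral.integral_of_le (hg β hβ)
    _ = ∫ β, (Ioc (0:ℝ) βb).indicator (fun x => ∫ y in Ioc (0:ℝ) (g x), f (x, y)) β :=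
        (integral_indicator measurableSet_Ioc).symm
    _ = ∫ β, ∫ γ, S.indicator f (β, γ) :=
        integral_congr_ae (Filter.Eventually.of_forall (fun x => (key x).symm))
    _ = ∫ p, S.indicator f p ∂(Measure.prod volume volume) := (integral_prod _ hfi2).symm
    _ = ∫ p, S.indicator f p := by rw [← Measure.volume_eq_prod]
    _ = ∫ p in S, f p := integral_indicator hSm

set_option maxHeartbeats 1000000 in
/-- in regime B (low toll), all three actions are used by a
positive mass of agents in every Wardrop equilibrium. -/
theorem stmt7
    (ℓo ℓh : ℝ → ℝ) (A : ℕ) (D τ βb γb : ℝ) (f : ℝ × ℝ → ℝ)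
    (hD : 0 < D) (hA : 2 ≤ A) (hβb : 0 < βb) (hγb : 0 < γb)
    (hoc : ContinuousOn ℓo (Ici 0)) (hom : StrictMonoOn ℓo (Ici 0))
    (hhc : ContinuousOn ℓh (Ici 0)) (hhm : StrictMonoOn ℓh (Ici 0))
    (hfree : ℓo 0 = ℓh 0)
    (hfc : ContinuousOn f (Rbox βb γb)) (hfpos : ∀ p ∈ Rbox βb γb, 0 < f p)
    (hfint : (∫ p in Rbox βb γb, f p) = 1)
    (hτ : 0 < τ)
    (hreg : τ < min γb (βb * ellDagger ℓo ℓh A D βb γb τ f))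
    (s : ℝ × ℝ → Action) (hs : IsWardrop ℓo ℓh A D τ βb γb f s) :
    0 < stratDist βb γb f s Action.toll ∧
    0 < stratDist βb γb f s Action.pool ∧
    0 < stratDist βb γb f s Action.o := by
  have hτγb : τ < γb := lt_of_lt_of_le hreg (min_le_left _ _)
  have hτℓ : τ < βb * ellDagger ℓo ℓh A D βb γb τ f := lt_of_lt_of_le hreg (min_le_right _ _)
  have hA0 : (0:ℝ) < (A:ℝ) := by exact_mod_cast lt_of_lt_of_le (by norm_num) hA
  set σ := stratDist βb γb f s with hσdef
  -- basic measure-theoretic setup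
  have hRc : IsCompact (Rbox βb γb) := isCompact_Icc.prod isCompact_Icc
  have hRm : MeasurableSet (Rbox βb γb) := measurableSet_Icc.prod measurableSet_Icc
  have hfiR : IntegrableOn f (Rbox βb γb) := hfc.integrableOn_compact hRc
  have hms : ∀ a : Action, MeasurableSet (s ⁻¹' {a}) :=
    fun a => hs.1 MeasurableSpace.measurableSet_top
  have hmsa : ∀ a : Action, MeasurableSet (Rbox βb γb ∩ s ⁻¹' {a}) :=
    fun a => hRm.inter (hms a)
  have hfia : ∀ a : Action, IntegrableOn f (Rbox βb γb ∩ s ⁻¹' {a}) :=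
    fun a => hfiR.mono_set inter_subset_left
  have hpR : ∀ p ∈ Rbox βb γb, 0 ≤ p.1 ∧ p.1 ≤ βb ∧ 0 ≤ p.2 ∧ p.2 ≤ γb := by
    intro p hp
    rw [Rbox, Set.mem_prod] at hp
    exact ⟨hp.1.1, hp.1.2, hp.2.1, hp.2.2⟩
  have hσnn : ∀ a : Action, 0 ≤ σ a := by
    intro a
    rw [hσdef]
    exact setIntegral_nonneg (hmsa a) (fun x hx => (hfpos x hx.1).le)
  have nullmass : ∀ (a : Action) (T : Set (ℝ×ℝ)),
      (Rbox βb γb ∩ s ⁻¹' {a} ⊆ T) → volume T = 0 → σ a = 0 := by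
    intro a T hsub hT
    rw [hσdef]
    exact setIntegral_zero_of_null (measure_mono_null hsub hT)
  have null_vert : ∀ c : ℝ, volume (({c} : Set ℝ) ×ˢ (univ : Set ℝ)) = 0 := by
    intro c
    rw [Measure.volume_eq_prod, Measure.prod_prod, Real.volume_singleton, zero_mul]
  have null_horiz : ∀ c : ℝ, volume ((univ : Set ℝ) ×ˢ ({c} : Set ℝ)) = 0 := by
    intro c
    rw [Measure.volume_eq_prod, Measure.prod_prod, Real.volume_singleton, mul_zero]
  -- the sum of the three masses is 1
  have hdisj : ∀ a b : Action, a ≠ b →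
      Disjoint (Rbox βb γb ∩ s ⁻¹' {a}) (Rbox βb γb ∩ s ⁻¹' {b}) := by
    intro a b hab
    rw [Set.disjoint_left]
    rintro p ⟨-, ha⟩ ⟨-, hb⟩
    exact hab ((Set.mem_singleton_iff.1 ha).symm.trans (Set.mem_singleton_iff.1 hb))
  have hcover : Rbox βb γb = (Rbox βb γb ∩ s ⁻¹' {Action.toll}) ∪
      ((Rbox βb γb ∩ s ⁻¹' {Action.pool}) ∪ (Rbox βb γb ∩ s ⁻¹' {Action.o})) := by
    ext p
    simp only [Set.mem_union, Set.mem_inter_iff, Set.mem_preimage, Set.mem_singleton_iff]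
    constructor
    · intro hp
      cases h : s p
      · exact Or.inl ⟨hp, rfl⟩
      · exact Or.inr (Or.inl ⟨hp, rfl⟩)
      · exact Or.inr (Or.inr ⟨hp, rfl⟩)
    · rintro (⟨hp, -⟩ | ⟨hp, -⟩ | ⟨hp, -⟩) <;> exact hp

  have hfint0 : (∫ p in Rbox βb γb, f p) = 1 := hfint
  have hsum : σ Action.toll + σ Action.pool + σ Action.o = 1 := by
    have e1 := setIntegral_union (μ := volume) (f := f)
      (hdisj Action.pool Action.o (by simp)) (hmsa Action.o)
      (hfia Action.pool) (hfia Action.o)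
    have e2 := setIntegral_union (μ := volume) (f := f)
      (Disjoint.union_right (hdisj Action.toll Action.pool (by simp))
        (hdisj Action.toll Action.o (by simp)))
      ((hmsa Action.pool).union (hmsa Action.o))
      (hfia Action.toll) ((hfia Action.pool).union (hfia Action.o))
    rw [hcover] at hfint
    rw [e2, e1] at hfint
    rw [hσdef]
    simp only [stratDist]
    linarith

  -- positive mass from forced rectangles
  have posmass : ∀ (a : Action) (x1 x2 y1 y2 : ℝ), x1 < x2 → y1 < y2 →
      (Ioo x1 x2 ×ˢ Ioo y1 y2 ⊆ Rbox βb γb ∩ s ⁻¹' {a}) → 0 < σ a := by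
    intro a x1 x2 y1 y2 hx hy hsub
    obtain ⟨p₀, hp₀, hmin⟩ := hRc.exists_isMinOn
      ⟨(0,0), by rw [Rbox, Set.mem_prod]; exact ⟨⟨le_rfl, hβb.le⟩, ⟨le_rfl, hγb.le⟩⟩⟩ hfc
    have hc : 0 < f p₀ := hfpos p₀ hp₀
    have hTm : MeasurableSet (Ioo x1 x2 ×ˢ Ioo y1 y2) := measurableSet_Ioo.prod measurableSet_Ioo
    have hTR : Ioo x1 x2 ×ˢ Ioo y1 y2 ⊆ Rbox βb γb := hsub.trans inter_subset_left
    have hvol : volume (Ioo x1 x2 ×ˢ Ioo y1 y2) =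
        ENNReal.ofReal (x2 - x1) * ENNReal.ofReal (y2 - y1) := by
      rw [Measure.volume_eq_prod, Measure.prod_prod, Real.volume_Ioo, Real.volume_Ioo]
    have hvne : volume (Ioo x1 x2 ×ˢ Ioo y1 y2) ≠ ⊤ := by
      rw [hvol]; exact ENNReal.mul_ne_top ENNReal.ofReal_ne_top ENNReal.ofReal_ne_top
    have htoReal : 0 < (volume (Ioo x1 x2 ×ˢ Ioo y1 y2)).toReal := by
      rw [hvol, ENNReal.toReal_mul, ENNReal.toReal_ofReal (by linarith),
        ENNReal.toReal_ofReal (by linarith)]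
      exact mul_pos (by linarith) (by linarith)
    have h1 : f p₀ * (volume (Ioo x1 x2 ×ˢ Ioo y1 y2)).toReal ≤ ∫ p in Ioo x1 x2 ×ˢ Ioo y1 y2, f p :=
      setIntegral_ge_of_const_le_real hTm hvne (fun x hx' => isMinOn_iff.1 hmin x (hTR hx'))
        (hfiR.mono_set hTR)
    have h2 : (∫ p in Ioo x1 x2 ×ˢ Ioo y1 y2, f p) ≤ σ a := by
      rw [hσdef]
      refine setIntegral_mono_set (hfia a) ((ae_restrict_iff' (hmsa a)).2
        (Filter.Eventually.of_forall (fun x hx' => (hfpos x hx'.1).le))) ?_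
      rw [ae_le_set, diff_eq_empty.2 hsub]
      exact measure_empty
    nlinarith [mul_pos hc htoReal]
  -- pointwise equilibrium conditions
  have Wtoll : ∀ p ∈ Rbox βb γb, s p = Action.toll →
      τ ≤ p.2 ∧ τ ≤ p.1 * (ℓo (xo D σ) - ℓh (xh A D σ)) := by
    intro p hp h
    have h1 := hs.2 p hp Action.pool
    have h2 := hs.2 p hp Action.o
    rw [h] at h1 h2
    simp only [cost] at h1 h2
    refine ⟨by linarith, ?_⟩
    nlinarith [mul_sub p.1 (ℓo (xo D σ)) (ℓh (xh A D σ))]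
  have Wpool : ∀ p ∈ Rbox βb γb, s p = Action.pool →
      p.2 ≤ p.1 * (ℓo (xo D σ) - ℓh (xh A D σ)) := by
    intro p hp h
    have h2 := hs.2 p hp Action.o
    rw [h] at h2
    simp only [cost] at h2
    nlinarith [mul_sub p.1 (ℓo (xo D σ)) (ℓh (xh A D σ))]
  have Fpool : ∀ p ∈ Rbox βb γb, p.2 < τ → p.2 < p.1 * (ℓo (xo D σ) - ℓh (xh A D σ)) →
      s p = Action.pool := by
    intro p hp h1 h2
    cases h : s p
    · have := hs.2 p hp Action.pool
      rw [h] at this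
      simp only [cost] at this
      exact absurd this (by push_neg; linarith)
    · rfl
    · have := hs.2 p hp Action.pool
      rw [h] at this
      simp only [cost] at this
      exfalso
      nlinarith [mul_sub p.1 (ℓo (xo D σ)) (ℓh (xh A D σ))]
  have Ftoll : ∀ p ∈ Rbox βb γb, τ < p.2 → τ < p.1 * (ℓo (xo D σ) - ℓh (xh A D σ)) →
      s p = Action.toll := by
    intro p hp h1 h2
    cases h : s p
    · rfl
    · have := hs.2 p hp Action.toll
      rw [h] at this
      simp only [cost] at this
      exact absurd this (by push_neg; linarith)
    · have := hs.2 p hp Action.toll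
      rw [h] at this
      simp only [cost] at this
      exfalso
      nlinarith [mul_sub p.1 (ℓo (xo D σ)) (ℓh (xh A D σ))]
  -- nonnegativity of flows
  have hxh_nn : 0 ≤ xh A D σ :=
    mul_nonneg (add_nonneg (hσnn _) (div_nonneg (hσnn _) hA0.le)) hD.le
  have hxo_nn : 0 ≤ xo D σ := mul_nonneg (hσnn _) hD.le
  -- Step 1: the latency difference is positive
  have hδpos : 0 < ℓo (xo D σ) - ℓh (xh A D σ) := by
    by_contra hcon
    push_neg at hcon
    have ht0 : σ Action.toll = 0 := by
      refine nullmass Action.toll ∅ ?_ (by simp)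
      rintro p ⟨hp, hpa⟩
      obtain ⟨hβ0, hβb', hγ0, hγb'⟩ := hpR p hp
      have h1 := (Wtoll p hp (Set.mem_singleton_iff.1 hpa)).2
      exfalso
      nlinarith [mul_nonpos_of_nonneg_of_nonpos hβ0 hcon]
    have hp0 : σ Action.pool = 0 := by
      refine nullmass Action.pool ((univ : Set ℝ) ×ˢ ({0} : Set ℝ)) ?_ (null_horiz 0)
      rintro p ⟨hp, hpa⟩
      obtain ⟨hβ0, hβb', hγ0, hγb'⟩ := hpR p hp
      have h3 := Wpool p hp (Set.mem_singleton_iff.1 hpa)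
      have : p.2 = 0 := le_antisymm (by nlinarith [mul_nonpos_of_nonneg_of_nonpos hβ0 hcon]) hγ0
      exact ⟨trivial, this⟩
    have ho1 : σ Action.o = 1 := by linarith
    have hxo1 : xo D σ = D := by rw [xo, ho1, one_mul]
    have hxh0 : xh A D σ = 0 := by rw [xh, ht0, hp0]; norm_num
    rw [hxo1, hxh0, ← hfree] at hcon
    have := hom (mem_Ici.2 le_rfl) (mem_Ici.2 hD.le) hD
    linarith
  -- Step 2: σ_o > 0
  have hσo_pos : 0 < σ Action.o := by
    rcases (hσnn Action.o).lt_or_eq with h | h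
    · exact h
    · exfalso
      have hxo0 : xo D σ = 0 := by rw [xo, ← h, zero_mul]
      have hmono : ℓh 0 ≤ ℓh (xh A D σ) :=
        hhm.monotoneOn (mem_Ici.2 le_rfl) (mem_Ici.2 hxh_nn) hxh_nn
      rw [hxo0, hfree] at hδpos
      linarith
  set dlt := ℓo (xo D σ) - ℓh (xh A D σ) with hdlt
  -- Step 3: σ_pool > 0
  have hσp_pos : 0 < σ Action.pool := by
    have hm0 : 0 < min τ (βb * dlt / 2) := lt_min hτ (by positivity)
    refine posmass Action.pool (βb/2) βb 0 (min τ (βb * dlt / 2)) (by linarith) hm0 ?_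
    rintro p ⟨⟨h1, h2⟩, ⟨h3, h4⟩⟩
    have hmτ : min τ (βb * dlt / 2) ≤ τ := min_le_left _ _
    have hmδ : min τ (βb * dlt / 2) ≤ βb * dlt / 2 := min_le_right _ _
    have hpRb : p ∈ Rbox βb γb := by
      rw [Rbox, Set.mem_prod]
      exact ⟨⟨by linarith, h2.le⟩, ⟨h3.le, by linarith⟩⟩
    refine ⟨hpRb, ?_⟩
    exact Fpool p hpRb (by linarith) (by nlinarith)
  -- Step 4a: the latency difference exceeds τ/βb
  have hδτ : τ < βb * dlt := by
    by_contra hcon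
    push_neg at hcon
    have ht0 : σ Action.toll = 0 := by
      refine nullmass Action.toll (({τ/dlt} : Set ℝ) ×ˢ (univ : Set ℝ)) ?_ (null_vert _)
      rintro p ⟨hp, hpa⟩
      obtain ⟨hβ0, hβb', hγ0, hγb'⟩ := hpR p hp
      have h1 := (Wtoll p hp (Set.mem_singleton_iff.1 hpa)).2
      have h2 : p.1 * dlt ≤ τ := by nlinarith
      have h3 : p.1 * dlt = τ := le_antisymm h2 h1
      refine ⟨?_, trivial⟩
      show p.1 ∈ ({τ/dlt} : Set ℝ)
      rw [Set.mem_singleton_iff, eq_div_iff hδpos.ne']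
      linarith
    set g : ℝ → ℝ := fun β => min τ γb * β / βb with hgdef
    have hgm : Measurable g := (measurable_id.const_mul _).div_const βb
    have hSR : {p : ℝ × ℝ | p.1 ∈ Ioc 0 βb ∧ p.2 ∈ Ioc 0 (g p.1)} ⊆ Rbox βb γb := by
      rintro p ⟨⟨hp1, hp2⟩, ⟨hq1, hq2⟩⟩
      rw [Rbox, Set.mem_prod]
      have hmin0 : 0 ≤ min τ γb := le_min hτ.le hγb.le
      have hgle : g p.1 ≤ γb := by
        rw [hgdef]
        simp only []
        rw [div_le_iff₀ hβb]
        nlinarith [min_le_right τ γb]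
      exact ⟨⟨hp1.le, hp2⟩, ⟨hq1.le, le_trans hq2 hgle⟩⟩
    have hSm : MeasurableSet {p : ℝ × ℝ | p.1 ∈ Ioc 0 βb ∧ p.2 ∈ Ioc 0 (g p.1)} :=
      graph_measurable βb g hgm
    have hfiS : IntegrableOn f {p : ℝ × ℝ | p.1 ∈ Ioc 0 βb ∧ p.2 ∈ Ioc 0 (g p.1)} :=
      hfiR.mono_set hSR
    have hdag : sigmaDagger βb γb τ f = ∫ p in {p : ℝ × ℝ | p.1 ∈ Ioc 0 βb ∧ p.2 ∈ Ioc 0 (g p.1)}, f p := by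
      rw [sigmaDagger]
      exact fubini_aux f βb g hβb.le
        (fun β hβ => div_nonneg (mul_nonneg (le_min hτ.le hγb.le) hβ.1.le) hβb.le) hgm hfiS
    have hple : σ Action.pool ≤ sigmaDagger βb γb τ f := by
      rw [hdag, hσdef]
      refine setIntegral_mono_set hfiS ((ae_restrict_iff' hSm).2
        (Filter.Eventually.of_forall (fun x hx => (hfpos x (hSR hx)).le))) ?_
      rw [ae_le_set]
      refine measure_mono_null ?_
        (measure_union_null (null_vert 0) (null_horiz 0))
      rintro p ⟨⟨hp, hpa⟩, hpS⟩
      obtain ⟨hβ0, hβb', hγ0, hγb'⟩ := hpR p hp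
      by_cases hb : p.1 = 0
      · exact Or.inl ⟨hb, trivial⟩
      · by_cases hg2 : p.2 = 0
        · exact Or.inr ⟨trivial, hg2⟩
        · exfalso
          apply hpS
          have hb' : 0 < p.1 := lt_of_le_of_ne hβ0 (Ne.symm hb)
          have hg' : 0 < p.2 := lt_of_le_of_ne hγ0 (Ne.symm hg2)
          have hpool := Wpool p hp (Set.mem_singleton_iff.1 hpa)
          refine ⟨⟨hb', hβb'⟩, ⟨hg', ?_⟩⟩
          show p.2 ≤ g p.1
          rw [hgdef]
          simp only [min_eq_left hτγb.le]
          rw [le_div_iff₀ hβb]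
          nlinarith
    have hdag0 : 0 ≤ sigmaDagger βb γb τ f := le_trans (hσnn Action.pool) hple
    have hdag1 : sigmaDagger βb γb τ f ≤ 1 := by
      rw [hdag, ← hfint0]
      refine setIntegral_mono_set hfiR ((ae_restrict_iff' hRm).2
        (Filter.Eventually.of_forall (fun x hx => (hfpos x hx).le))) ?_
      rw [ae_le_set, diff_eq_empty.2 hSR]
      exact measure_empty
    have hσo_eq : σ Action.o = 1 - σ Action.pool := by linarith
    have hxo_ge : (1 - sigmaDagger βb γb τ f) * D ≤ xo D σ := by
      rw [xo, hσo_eq]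
      exact mul_le_mul_of_nonneg_right (by linarith) hD.le
    have hxh_le : xh A D σ ≤ sigmaDagger βb γb τ f / A * D := by
      rw [xh, ht0, zero_add]
      refine mul_le_mul_of_nonneg_right ?_ hD.le
      rw [div_le_div_iff₀ hA0 hA0]
      nlinarith
    have hLo : ℓo ((1 - sigmaDagger βb γb τ f) * D) ≤ ℓo (xo D σ) :=
      hom.monotoneOn (mem_Ici.2 (mul_nonneg (by linarith) hD.le)) (mem_Ici.2 hxo_nn) hxo_ge
    have hLh : ℓh (xh A D σ) ≤ ℓh (sigmaDagger βb γb τ f / A * D) :=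
      hhm.monotoneOn (mem_Ici.2 hxh_nn)
        (mem_Ici.2 (mul_nonneg (div_nonneg hdag0 hA0.le) hD.le)) hxh_le
    have hfin : ellDagger ℓo ℓh A D βb γb τ f ≤ dlt := by
      rw [ellDagger, hdlt]
      linarith
    nlinarith
  -- Step 4b: σ_toll > 0
  have hσt_pos : 0 < σ Action.toll := by
    have hτδ : τ / dlt < βb := (div_lt_iff₀ hδpos).2 (by linarith)
    have h0 : 0 < τ / dlt := div_pos hτ hδpos
    refine posmass Action.toll ((τ/dlt + βb)/2) βb τ γb (by linarith) hτγb ?_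
    rintro p ⟨⟨h1, h2⟩, ⟨h3, h4⟩⟩
    have hpRb : p ∈ Rbox βb γb := by
      rw [Rbox, Set.mem_prod]
      exact ⟨⟨by linarith, h2.le⟩, ⟨by linarith, h4.le⟩⟩
    refine ⟨hpRb, ?_⟩
    have : τ / dlt < p.1 := by linarith
    exact Ftoll p hpRb h3 ((div_lt_iff₀ hδpos).1 this)
  exact ⟨hσt_pos, hσp_pos, hσo_pos⟩
end

section
/- Assume τ > 0 and either (γ̄ ≤ τ and γ̄ < β̄·ℓ†) (sub-regime A-2) or (τ < min{γ̄, β̄·ℓ†}) (regime B). Then every Wardrop equilibrium satisfies σ*_pool ≥ σ†_pool. -/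
open MeasureTheory Set

open HOT


section Aux

open MeasureTheory Set

private lemma graph_null' (g : ℝ → ℝ) (hg : Measurable g) :
    (volume : Measure (ℝ × ℝ)) {p : ℝ × ℝ | p.2 = g p.1} = 0 := by
  have hset : MeasurableSet {p : ℝ × ℝ | p.2 = g p.1} :=
    measurableSet_eq_fun measurable_snd (hg.comp measurable_fst)
  rw [Measure.volume_eq_prod, Measure.prod_apply hset]
  have h : ∀ x : ℝ, (volume : Measure ℝ) (Prod.mk x ⁻¹' {p : ℝ × ℝ | p.2 = g p.1}) = 0 := by
    intro x
    have : (Prod.mk x ⁻¹' {p : ℝ × ℝ | p.2 = g p.1}) = {g x} := by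
      ext y; simp [eq_comm]
    rw [this]; exact measure_singleton _
  simp [h]

/-- Region under the line `γ = c·β/β̄` (with open lower boundaries). -/
private def Lset (βb c : ℝ) : Set (ℝ × ℝ) :=
  {p : ℝ × ℝ | p.1 ∈ Ioc (0:ℝ) βb ∧ p.2 ∈ Ioc (0:ℝ) (c * p.1 / βb)}

private lemma Lset_meas (βb c : ℝ) : MeasurableSet (Lset βb c) := by
  have h1 : MeasurableSet {p : ℝ × ℝ | p.1 ∈ Ioc (0:ℝ) βb} :=
    measurable_fst measurableSet_Ioc
  have h2 : MeasurableSet {p : ℝ × ℝ | 0 < p.2 ∧ p.2 ≤ c * p.1 / βb} :=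
    (measurableSet_lt measurable_const measurable_snd).inter
      (measurableSet_le measurable_snd ((measurable_fst.const_mul c).div_const βb))
  have he : Lset βb c =
      {p : ℝ × ℝ | p.1 ∈ Ioc (0:ℝ) βb} ∩ {p | 0 < p.2 ∧ p.2 ≤ c * p.1 / βb} := by
    ext p; simp [Lset, mem_Ioc, and_assoc]
  rw [he]; exact h1.inter h2

private lemma fubini_Lset (βb c : ℝ) (hβb : 0 < βb) (hc0 : 0 ≤ c)
    (f : ℝ × ℝ → ℝ) (hL : IntegrableOn f (Lset βb c)) :
    (∫ p in Lset βb c, f p) = ∫ x in (0:ℝ)..βb, ∫ y in (0:ℝ)..(c * x / βb), f (x, y) := by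
  have hLm := Lset_meas βb c
  have hFint : Integrable ((Lset βb c).indicator f) ((volume : Measure ℝ).prod volume) := by
    rw [← Measure.volume_eq_prod]
    exact (integrable_indicator_iff hLm).2 hL
  calc (∫ p in Lset βb c, f p)
      = ∫ p, (Lset βb c).indicator f p := (integral_indicator hLm).symm
    _ = ∫ x, ∫ y, (Lset βb c).indicator f (x, y) := by
        rw [Measure.volume_eq_prod]; exact integral_prod _ hFint
    _ = ∫ x, (Ioc (0:ℝ) βb).indicator
          (fun x => ∫ y in (0:ℝ)..(c * x / βb), f (x, y)) x := by
        congr 1; funext x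
        have hslice : (fun y => (Lset βb c).indicator f (x, y)) =
            (Prod.mk x ⁻¹' Lset βb c).indicator (fun y => f (x, y)) := by
          funext y; simp [Set.indicator_apply, Lset, Set.mem_preimage]
        rw [hslice]
        by_cases hx : x ∈ Ioc (0:ℝ) βb
        · have hpre : Prod.mk x ⁻¹' Lset βb c = Ioc (0:ℝ) (c * x / βb) := by
            ext y
            simp only [Set.mem_preimage, Lset, Set.mem_setOf_eq, hx, true_and]
          have hle : (0:ℝ) ≤ c * x / βb :=
            div_nonneg (mul_nonneg hc0 hx.1.le) hβb.le
          rw [hpre, integral_indicator measurableSet_Ioc, Set.indicator_of_mem hx,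
            intervalIntegral.integral_of_le hle]
        · have hpre : Prod.mk x ⁻¹' Lset βb c = ∅ := by
            ext y
            simp only [Set.mem_preimage, Lset, Set.mem_setOf_eq, Set.mem_empty_iff_false,
              iff_false]
            exact fun h => hx h.1
          rw [hpre, Set.indicator_of_notMem hx]
          simp
    _ = ∫ x in Ioc (0:ℝ) βb, ∫ y in (0:ℝ)..(c * x / βb), f (x, y) :=
        integral_indicator measurableSet_Ioc
    _ = ∫ x in (0:ℝ)..βb, ∫ y in (0:ℝ)..(c * x / βb), f (x, y) :=
        (intervalIntegral.integral_of_le hβb.le).symm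

end Aux

/-- in sub-regime A-2 or regime B, every equilibrium satisfies
σ*_pool ≥ σ†_pool. -/
theorem stmt9
    (ℓo ℓh : ℝ → ℝ) (A : ℕ) (D τ βb γb : ℝ) (f : ℝ × ℝ → ℝ)
    (hD : 0 < D) (hA : 2 ≤ A) (hβb : 0 < βb) (hγb : 0 < γb)
    (hoc : ContinuousOn ℓo (Ici 0)) (hom : StrictMonoOn ℓo (Ici 0))
    (hhc : ContinuousOn ℓh (Ici 0)) (hhm : StrictMonoOn ℓh (Ici 0))
    (hfree : ℓo 0 = ℓh 0)
    (hfc : ContinuousOn f (Rbox βb γb)) (hfpos : ∀ p ∈ Rbox βb γb, 0 < f p)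
    (hfint : (∫ p in Rbox βb γb, f p) = 1)
    (hτ : 0 < τ)
    (hreg : (γb ≤ τ ∧ γb < βb * ellDagger ℓo ℓh A D βb γb τ f) ∨
      τ < min γb (βb * ellDagger ℓo ℓh A D βb γb τ f))
    (s : ℝ × ℝ → Action) (hs : IsWardrop ℓo ℓh A D τ βb γb f s) :
    sigmaDagger βb γb τ f ≤ stratDist βb γb f s Action.pool := by
  classical
  obtain ⟨hsmeas, hW⟩ := hs
  set σ : Action → ℝ := stratDist βb γb f s with hσ
  set E : ℝ := ellDagger ℓo ℓh A D βb γb τ f with hE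
  set c : ℝ := min τ γb with hc
  set δ : ℝ := ℓo (xo D σ) - ℓh (xh A D σ) with hδdef
  clear_value σ E c δ
  have hc0 : 0 < c := hc ▸ lt_min hτ hγb
  have hcτ : c ≤ τ := hc ▸ min_le_left _ _
  have hcγ : c ≤ γb := hc ▸ min_le_right _ _
  -- basic measure-theoretic facts
  have hboxm : MeasurableSet (Rbox βb γb) := measurableSet_Icc.prod measurableSet_Icc
  have hsm : ∀ a : Action, MeasurableSet (Rbox βb γb ∩ s ⁻¹' {a}) := fun a =>
    hboxm.inter (hsmeas trivial)
  have hboxint : IntegrableOn f (Rbox βb γb) :=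
    ContinuousOn.integrableOn_compact (isCompact_Icc.prod isCompact_Icc) hfc
  have hf0 : ∀ p ∈ Rbox βb γb, 0 ≤ f p := fun p hp => (hfpos p hp).le
  have hintA : ∀ a : Action, IntegrableOn f (Rbox βb γb ∩ s ⁻¹' {a}) := fun a =>
    hboxint.mono_set inter_subset_left
  have hLm := Lset_meas βb c
  have hLsub : Lset βb c ⊆ Rbox βb γb := by
    rintro ⟨x, y⟩ ⟨hx, hy⟩
    have h1 : c * x / βb ≤ c := by
      rw [div_le_iff₀ hβb]; nlinarith [hx.2, hc0.le]
    exact ⟨⟨hx.1.le, hx.2⟩, ⟨hy.1.le, hy.2.trans (h1.trans hcγ)⟩⟩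
  have hLint : IntegrableOn f (Lset βb c) := hboxint.mono_set hLsub
  set Sd : ℝ := ∫ p in Lset βb c, f p with hSd
  clear_value Sd
  have hps : sigmaDagger βb γb τ f = Sd := by
    rw [hSd, fubini_Lset βb c hβb hc0.le f hLint, sigmaDagger, hc]
  -- partition of the box
  have hcover : Rbox βb γb =
      (Rbox βb γb ∩ s ⁻¹' {Action.toll} ∪ Rbox βb γb ∩ s ⁻¹' {Action.pool})
        ∪ Rbox βb γb ∩ s ⁻¹' {Action.o} := by
    ext p
    constructor
    · intro hp
      cases h : s p
      · exact Or.inl (Or.inl ⟨hp, by simp [h]⟩)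
      · exact Or.inl (Or.inr ⟨hp, by simp [h]⟩)
      · exact Or.inr ⟨hp, by simp [h]⟩
    · rintro ((⟨hp, _⟩ | ⟨hp, _⟩) | ⟨hp, _⟩) <;> exact hp
  have hdisj1 : Disjoint (Rbox βb γb ∩ s ⁻¹' {Action.toll})
      (Rbox βb γb ∩ s ⁻¹' {Action.pool}) := by
    rw [Set.disjoint_left]
    rintro p ⟨_, h1⟩ ⟨_, h2⟩
    simp only [Set.mem_preimage, Set.mem_singleton_iff] at h1 h2
    rw [h1] at h2; exact absurd h2 (by simp)
  have hdisj2 : Disjoint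
      (Rbox βb γb ∩ s ⁻¹' {Action.toll} ∪ Rbox βb γb ∩ s ⁻¹' {Action.pool})
      (Rbox βb γb ∩ s ⁻¹' {Action.o}) := by
    rw [Set.disjoint_left]
    rintro p (⟨_, h1⟩ | ⟨_, h1⟩) ⟨_, h2⟩ <;>
      · simp only [Set.mem_preimage, Set.mem_singleton_iff] at h1 h2
        rw [h1] at h2; exact absurd h2 (by simp)
  have hsum : σ Action.toll + σ Action.pool + σ Action.o = 1 := by
    have e2 := setIntegral_union (μ := volume) (f := f) hdisj1 (hsm Action.pool)
      (hintA Action.toll) (hintA Action.pool)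
    have e1 := setIntegral_union (μ := volume) (f := f) hdisj2 (hsm Action.o)
      ((hintA Action.toll).union (hintA Action.pool)) (hintA Action.o)
    rw [← hcover] at e1
    simp only [hσ, stratDist]
    rw [← e2, ← e1, hfint]
  have hσnn : ∀ a : Action, 0 ≤ σ a := by
    intro a; rw [hσ]
    exact setIntegral_nonneg (hsm a) (fun p hp => hf0 p hp.1)
  rcases le_or_gt (c / βb) δ with hcase | hcase
  · -- Case 1 : δ ≥ c/β̄ ; the whole region under the line carpools
    have hS1 : ∀ p : ℝ × ℝ, p ∈ Rbox βb γb → p.2 < c * p.1 / βb → s p = Action.pool := by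
      intro p hp hlt
      have hβ1 : p.1 ≤ βb := hp.1.2
      have hβ0 : 0 ≤ p.1 := hp.1.1
      have hγτ : p.2 < τ := by
        have h1 : c * p.1 / βb ≤ c := by
          rw [div_le_iff₀ hβb]; nlinarith [hc0.le]
        linarith
      have hγδ : p.2 < p.1 * δ := by
        have h2 : c * p.1 / βb ≤ δ * p.1 := by
          rw [div_le_iff₀ hβb] at hcase ⊢
          · nlinarith
        linarith [mul_comm δ p.1]
      cases h : s p
      · have := hW p hp Action.pool
        rw [h] at this
        simp only [cost] at this
        linarith
      · rfl
      · have := hW p hp Action.pool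
        rw [h] at this
        simp only [cost] at this
        have hx : p.1 * δ = p.1 * ℓo (xo D σ) - p.1 * ℓh (xh A D σ) := by
          rw [hδdef]; ring
        linarith
    have hGnull : (volume : Measure (ℝ × ℝ)) {p : ℝ × ℝ | p.2 = c / βb * p.1} = 0 :=
      graph_null' (fun x => c / βb * x) (measurable_id.const_mul _)
    have haeq : Lset βb c =ᵐ[volume]
        Lset βb c \ {p : ℝ × ℝ | p.2 = c / βb * p.1} := by
      refine ae_eq_set.mpr ?_
      constructor
      · refine measure_mono_null ?_ hGnull
        intro p hp
        by_contra hpg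
        exact hp.2 ⟨hp.1, hpg⟩
      · refine measure_mono_null ?_ (measure_empty (μ := volume))
        intro p hp
        exact absurd hp.1.1 hp.2
    have hsubLG : Lset βb c \ {p : ℝ × ℝ | p.2 = c / βb * p.1} ⊆
        Rbox βb γb ∩ s ⁻¹' {Action.pool} := by
      rintro p ⟨hpL, hpG⟩
      have hbox := hLsub hpL
      have hlt : p.2 < c * p.1 / βb := by
        have h1 : p.2 ≤ c * p.1 / βb := hpL.2.2
        have h2 : p.2 ≠ c / βb * p.1 := hpG
        have h3 : c * p.1 / βb = c / βb * p.1 := by ring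
        rcases lt_or_eq_of_le h1 with h | h
        · exact h
        · exact absurd (h.trans h3) h2
      exact ⟨hbox, by simp [hS1 p hbox hlt]⟩
    have hmono : Sd ≤ σ Action.pool := by
      calc Sd = ∫ p in Lset βb c \ {p : ℝ × ℝ | p.2 = c / βb * p.1}, f p := by
            rw [hSd]; exact setIntegral_congr_set haeq
        _ ≤ ∫ p in Rbox βb γb ∩ s ⁻¹' {Action.pool}, f p := by
            refine setIntegral_mono_set (hintA Action.pool) ?_
              (HasSubset.Subset.eventuallyLE hsubLG)
            exact (ae_restrict_iff' (hsm Action.pool)).mpr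
              (Filter.Eventually.of_forall fun p hp => hf0 p hp.1)
        _ = σ Action.pool := by rw [hσ]; rfl
    rw [hps]
    exact hmono
  · -- Case 2 : δ < c/β̄ ; leads to a contradiction with the regime hypothesis
    exfalso
    have hβδ : ∀ β : ℝ, 0 ≤ β → β ≤ βb → β * δ < τ := by
      intro β h0 h1
      have hbc : βb * δ < c := by
        have := (lt_div_iff₀ hβb).1 hcase
        linarith [mul_comm δ βb]
      rcases le_or_gt δ 0 with h | h
      · nlinarith
      · nlinarith
    have htoll_empty : Rbox βb γb ∩ s ⁻¹' {Action.toll} = ∅ := by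
      ext p
      simp only [Set.mem_inter_iff, Set.mem_preimage, Set.mem_singleton_iff,
        Set.mem_empty_iff_false, iff_false, not_and]
      intro hp hsp
      have := hW p hp Action.o
      rw [hsp] at this
      simp only [cost] at this
      have hβδ' := hβδ p.1 hp.1.1 hp.1.2
      have hx : p.1 * δ = p.1 * ℓo (xo D σ) - p.1 * ℓh (xh A D σ) := by
        rw [hδdef]; ring
      linarith
    have hσtoll : σ Action.toll = 0 := by
      simp only [hσ, stratDist]
      rw [htoll_empty]
      simp
    have hZnull : (volume : Measure (ℝ × ℝ)) {p : ℝ × ℝ | p.2 = (0:ℝ)} = 0 := by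
      have := graph_null' (fun _ => (0:ℝ)) measurable_const
      simpa using this
    have hpool_sub : (Rbox βb γb ∩ s ⁻¹' {Action.pool}) \ {p : ℝ × ℝ | p.2 = (0:ℝ)} ⊆
        Lset βb c := by
      rintro p ⟨⟨hp, hsp⟩, hpz⟩
      simp only [Set.mem_preimage, Set.mem_singleton_iff] at hsp
      have hγpos : 0 < p.2 := lt_of_le_of_ne hp.2.1 (fun h => hpz h.symm)
      have := hW p hp Action.o
      rw [hsp] at this
      simp only [cost] at this
      have hx : p.1 * δ = p.1 * ℓo (xo D σ) - p.1 * ℓh (xh A D σ) := by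
        rw [hδdef]; ring
      have hγδ : p.2 ≤ p.1 * δ := by linarith
      have hβpos : 0 < p.1 := by
        rcases lt_or_eq_of_le hp.1.1 with h | h
        · exact h
        · exfalso; rw [← h] at hγδ; simp at hγδ; linarith
      have hlt : p.2 < c * p.1 / βb := by
        have h2 : p.1 * δ < p.1 * (c / βb) := by
          exact mul_lt_mul_of_pos_left hcase hβpos
        have h3 : p.1 * (c / βb) = c * p.1 / βb := by ring
        linarith
      exact ⟨⟨hβpos, hp.1.2⟩, ⟨hγpos, hlt.le⟩⟩
    have haeq : ((Rbox βb γb ∩ s ⁻¹' {Action.pool} : Set (ℝ × ℝ))) =ᵐ[volume]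
        ((Rbox βb γb ∩ s ⁻¹' {Action.pool} : Set (ℝ × ℝ)) \ {p : ℝ × ℝ | p.2 = (0:ℝ)}) := by
      refine ae_eq_set.mpr ?_
      constructor
      · refine measure_mono_null ?_ hZnull
        intro p hp
        by_contra hpg
        exact hp.2 ⟨hp.1, hpg⟩
      · refine measure_mono_null ?_ (measure_empty (μ := volume))
        intro p hp
        exact absurd hp.1.1 hp.2
    have hσpool_le : σ Action.pool ≤ Sd := by
      calc σ Action.pool
          = ∫ p in (Rbox βb γb ∩ s ⁻¹' {Action.pool}) \ {p : ℝ × ℝ | p.2 = (0:ℝ)}, f p := by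
            rw [hσ]; exact setIntegral_congr_set haeq
        _ ≤ ∫ p in Lset βb c, f p := by
            refine setIntegral_mono_set hLint ?_
              (HasSubset.Subset.eventuallyLE hpool_sub)
            exact (ae_restrict_iff' hLm).mpr
              (Filter.Eventually.of_forall fun p hp => hf0 p (hLsub hp))
        _ = Sd := hSd.symm
    have hSd_nn : 0 ≤ Sd := by
      rw [hSd]; exact setIntegral_nonneg hLm (fun p hp => hf0 p (hLsub hp))
    have hSd_le1 : Sd ≤ 1 := by
      rw [← hfint, hSd]
      refine setIntegral_mono_set hboxint ?_ (HasSubset.Subset.eventuallyLE hLsub)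
      exact (ae_restrict_iff' hboxm).mpr (Filter.Eventually.of_forall hf0)
    have hσo : σ Action.o = 1 - σ Action.pool := by linarith
    have hA0 : (0:ℝ) < (A:ℝ) := by
      have : (2:ℝ) ≤ (A:ℝ) := by exact_mod_cast hA
      linarith
    have h1 : ℓo ((1 - Sd) * D) ≤ ℓo (xo D σ) := by
      have hx : xo D σ = (1 - σ Action.pool) * D := by rw [xo, hσo]
      refine hom.monotoneOn ?_ ?_ ?_
      · exact mul_nonneg (by linarith) hD.le
      · rw [hx]; exact mul_nonneg (by linarith [hσpool_le]) hD.le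
      · rw [hx]; nlinarith [hσpool_le]
    have h2 : ℓh (xh A D σ) ≤ ℓh (Sd / (A:ℝ) * D) := by
      have hx : xh A D σ = σ Action.pool / (A:ℝ) * D := by
        rw [xh, hσtoll]; ring
      have hdiv : σ Action.pool / (A:ℝ) ≤ Sd / (A:ℝ) := by gcongr
      refine hhm.monotoneOn ?_ ?_ ?_
      · rw [hx]
        exact mul_nonneg (div_nonneg (hσnn Action.pool) hA0.le) hD.le
      · exact mul_nonneg (div_nonneg hSd_nn hA0.le) hD.le
      · rw [hx]
        nlinarith
    have hEδ : E ≤ δ := by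
      have hEeq : E = ℓo ((1 - Sd) * D) - ℓh (Sd / (A:ℝ) * D) := by
        rw [hE, ellDagger, hps]
      rw [hEeq, hδdef]
      linarith
    have hcE : c < βb * E := by
      rcases hreg with ⟨hga, hgb⟩ | hb
      · have : c = γb := hc ▸ min_eq_right hga
        rw [this]; exact hgb
      · have hτγ : τ ≤ γb := (lt_min_iff.1 hb).1.le
        have : c = τ := hc ▸ min_eq_left hτγ
        rw [this]; exact (lt_min_iff.1 hb).2
    have hfin : c / βb < E := (div_lt_iff₀ hβb).2 (by rw [mul_comm]; exact hcE)
    exact absurd (hcase.trans hfin) (not_lt.2 hEδ)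
end
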